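/- arXiv:2208.14732 — 9 statements merged into one kernel-verified Lean document; each statement's English description precedes it below -/
import Mathlib

section
/- Let μ be a doubling measure on a connected metric space X with doubling constant c_μ. Then there exist an exponent σ > 0 and a constant c_σ > 0, both depending only on c_μ, such that μ(B(x,r))/μ(B(x,R)) ≤ c_σ (r/R)^σ for all x ∈ X and all 0 < r < R ≤ 2 diam(X). -/
/-!
Since `X` is connected and `R ≤ 2 diam X`, for every `s ≤ R / 4` there is a point `y` with
`d(x, y) = 3s/4`. The ball `B(y, s/4)` lies in `B(x, s)` outside `B(x, s/2)`, and by doubling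
three times it carries at least a `c⁻³` fraction of the mass of `B(x, s/2)`. Hence
`μ(B(x, s/2)) ≤ θ μ(B(x, s))` with `θ = c³/(c³+1) < 1`, and iterating this halving down from
`R / 4` gives the power law with exponent `σ = log₂ θ⁻¹`.
-/

open MeasureTheory Metric Set ENNReal NNReal

lemma exists_dist_eq_of_two_mul_lt_ediam {X : Type*} [MetricSpace X] [ConnectedSpace X]
    (x : X) {t : ℝ} (ht : 0 ≤ t) (h : 2 * ENNReal.ofReal t < ediam (univ : Set X)) :
    ∃ y, dist x y = t := by
  obtain ⟨y, hy⟩ : ∃ y, t < dist x y := by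
    by_contra! hle
    have hsub : univ ⊆ closedEBall x (ENNReal.ofReal t) := fun y _ => by
      rw [mem_closedEBall, edist_comm, edist_dist]
      exact ENNReal.ofReal_le_ofReal (hle y)
    exact h.not_ge ((ediam_mono hsub).trans ediam_closedEBall_le)
  exact intermediate_value_univ x y (continuous_const.dist continuous_id) ⟨by simpa using ht, hy.le⟩

lemma measure_ball_half_le_of_dist_eq {X : Type*} [MetricSpace X] [MeasurableSpace X]
    [OpensMeasurableSpace X] (μ : Measure X) (c : ℝ≥0)
    (hdbl : ∀ (x : X) (r : ℝ), 0 < r → μ (ball x (2 * r)) ≤ (c : ℝ≥0∞) * μ (ball x r))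
    {x y : X} {s : ℝ} (hs : 0 < s) (hy : dist x y = 3 * s / 4) :
    μ (ball x (s / 2)) ≤ ENNReal.ofReal (c ^ 3 / (c ^ 3 + 1)) * μ (ball x s) := by
  have hdisj : Disjoint (ball x (s / 2)) (ball y (s / 4)) := by
    refine Set.disjoint_left.2 fun z hzx hzy => ?_
    rw [mem_ball] at hzx hzy
    linarith [dist_triangle_left x y z]
  have hsub : ball x (s / 2) ∪ ball y (s / 4) ⊆ ball x s :=
    union_subset (ball_subset_ball (by linarith)) (ball_subset_ball' (by linarith [dist_comm x y]))
  have hsplit : μ (ball x (s / 2)) + μ (ball y (s / 4)) ≤ μ (ball x s) := by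
    rw [← measure_union hdisj measurableSet_ball]
    exact measure_mono hsub
  have hcover : μ (ball x (s / 2)) ≤ (c : ℝ≥0∞) ^ 3 * μ (ball y (s / 4)) :=
    calc μ (ball x (s / 2)) ≤ μ (ball y (2 * (2 * (2 * (s / 4))))) :=
          measure_mono (ball_subset_ball' (by linarith))
      _ ≤ c * μ (ball y (2 * (2 * (s / 4)))) := hdbl y _ (by positivity)
      _ ≤ c * (c * μ (ball y (2 * (s / 4)))) := by gcongr; exact hdbl y _ (by positivity)
      _ ≤ c * (c * (c * μ (ball y (s / 4)))) := by gcongr; exact hdbl y _ (by positivity)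
      _ = (c : ℝ≥0∞) ^ 3 * μ (ball y (s / 4)) := by ring
  have key : μ (ball x (s / 2)) * ((c : ℝ≥0∞) ^ 3 + 1) ≤ (c : ℝ≥0∞) ^ 3 * μ (ball x s) :=
    calc μ (ball x (s / 2)) * ((c : ℝ≥0∞) ^ 3 + 1)
        = (c : ℝ≥0∞) ^ 3 * μ (ball x (s / 2)) + μ (ball x (s / 2)) := by ring
      _ ≤ (c : ℝ≥0∞) ^ 3 * (μ (ball x (s / 2)) + μ (ball y (s / 4))) := by
          rw [mul_add]; exact add_le_add_right hcover _
      _ ≤ (c : ℝ≥0∞) ^ 3 * μ (ball x s) := by gcongr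
  have hθ : ENNReal.ofReal (c ^ 3 / (c ^ 3 + 1)) = (c : ℝ≥0∞) ^ 3 / ((c : ℝ≥0∞) ^ 3 + 1) := by
    rw [ENNReal.ofReal_div_of_pos (by positivity), ENNReal.ofReal_add (by positivity) zero_le_one,
      ← NNReal.coe_pow, ENNReal.ofReal_coe_nnreal, ENNReal.ofReal_one, ENNReal.coe_pow]
  rw [hθ, ENNReal.div_eq_inv_mul, mul_assoc, ← ENNReal.div_eq_inv_mul]
  exact ENNReal.le_div_iff_mul_le (by simp) (by simp) |>.2 key

lemma two_rpow_neg_pow_le_rpow_of_div_lt {σ r ρ : ℝ} (hσ : 0 ≤ σ) (hr : 0 < r) (hρ : 0 < ρ) {n : ℕ}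
    (hn : ρ / r < 2 ^ (n + 1)) : ((2 : ℝ) ^ (-σ)) ^ n ≤ (2 * r / ρ) ^ σ := by
  have hpow : (2 : ℝ) ^ (-(n : ℝ)) ≤ 2 * r / ρ := by
    rw [Real.rpow_neg zero_le_two, Real.rpow_natCast, inv_le_iff_one_le_mul₀ (by positivity),
      div_mul_eq_mul_div, le_div_iff₀ hρ, one_mul]
    rw [div_lt_iff₀ hr, pow_succ] at hn
    linarith
  calc ((2 : ℝ) ^ (-σ)) ^ n = ((2 : ℝ) ^ (-(n : ℝ))) ^ σ := by
        rw [← Real.rpow_mul_natCast zero_le_two, ← Real.rpow_mul zero_le_two]; ring_nf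
    _ ≤ (2 * r / ρ) ^ σ := Real.rpow_le_rpow (by positivity) hpow hσ

lemma Monotone.le_rpow_mul_of_forall_half_le {f : ℝ → ℝ≥0∞} (hf : Monotone f) {σ ρ : ℝ} (hσ : 0 ≤ σ)
    (hρ : 0 < ρ) (hhalf : ∀ s, 0 < s → s ≤ ρ → f (s / 2) ≤ ENNReal.ofReal (2 ^ (-σ)) * f s)
    {r R : ℝ} (hr : 0 < r) (hrR : r ≤ R) (hρR : ρ ≤ R) :
    f r ≤ ENNReal.ofReal ((2 * r / ρ) ^ σ) * f R := by
  have hiter : ∀ n : ℕ, f (ρ / 2 ^ n) ≤ ENNReal.ofReal (2 ^ (-σ)) ^ n * f ρ := by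
    intro n
    induction n with
    | zero => simp
    | succ n ih =>
      calc f (ρ / 2 ^ (n + 1)) = f (ρ / 2 ^ n / 2) := by rw [pow_succ, div_div]
        _ ≤ ENNReal.ofReal (2 ^ (-σ)) * f (ρ / 2 ^ n) :=
          hhalf _ (by positivity) (div_le_self hρ.le (one_le_pow₀ one_le_two))
        _ ≤ ENNReal.ofReal (2 ^ (-σ)) ^ (n + 1) * f ρ := by rw [pow_succ', mul_assoc]; gcongr
  rcases lt_or_ge ρ r with hρr | hrρ
  · have hone : 1 ≤ (2 * r / ρ) ^ σ := Real.one_le_rpow (by rw [le_div_iff₀ hρ]; linarith) hσ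
    calc f r ≤ 1 * f R := by rw [one_mul]; exact hf hrR
      _ ≤ ENNReal.ofReal ((2 * r / ρ) ^ σ) * f R := by
        gcongr; exact ENNReal.one_le_ofReal.2 hone
  · obtain ⟨n, hnle, hnlt⟩ := exists_nat_pow_near ((one_le_div hr).2 hrρ) one_lt_two
    calc f r ≤ f (ρ / 2 ^ n) := hf ((le_div_comm₀ hr (by positivity)).2 hnle)
      _ ≤ ENNReal.ofReal (2 ^ (-σ)) ^ n * f R := (hiter n).trans (by gcongr; exact hf hρR)
      _ ≤ ENNReal.ofReal ((2 * r / ρ) ^ σ) * f R := by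
        rw [← ENNReal.ofReal_pow (by positivity)]
        gcongr
        exact two_rpow_neg_pow_le_rpow_of_div_lt hσ hr hρ hnlt

theorem stmt1_general {X : Type*} [MetricSpace X] [MeasurableSpace X] [BorelSpace X]
    [ConnectedSpace X]
    (μ : Measure X)
    (c : ℝ≥0) (hc : 1 < c)
    (hdbl : ∀ (x : X) (r : ℝ), 0 < r → μ (ball x (2 * r)) ≤ (c : ℝ≥0∞) * μ (ball x r)) :
    ∃ σ cσ : ℝ, 0 < σ ∧ 0 < cσ ∧
      ∀ (x : X) (r R : ℝ), 0 < r → r < R →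
        ENNReal.ofReal R ≤ 2 * EMetric.diam (univ : Set X) →
        μ (ball x r) ≤ ENNReal.ofReal (cσ * (r / R) ^ σ) * μ (ball x R) := by
  set θ : ℝ := c ^ 3 / (c ^ 3 + 1)
  have hθ0 : 0 < θ := by
    have : (0 : ℝ) < c := by exact_mod_cast zero_lt_one.trans hc
    positivity
  have hθ1 : θ < 1 := (div_lt_one (by positivity)).2 (lt_add_one _)
  set σ := Real.logb 2 θ⁻¹
  have hσ : 0 < σ := Real.logb_pos one_lt_two ((one_lt_inv₀ hθ0).2 hθ1)
  have hθσ : (2 : ℝ) ^ (-σ) = θ := by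
    rw [Real.rpow_neg zero_le_two, Real.rpow_logb two_pos (by norm_num) (inv_pos.2 hθ0), inv_inv]
  refine ⟨σ, 8 ^ σ, hσ, by positivity, fun x r R hr hrR hdiam => ?_⟩
  have hR : 0 < R := hr.trans hrR
  have hhalf (s : ℝ) (hs : 0 < s) (hsR : s ≤ R / 4) :
      μ (ball x (s / 2)) ≤ ENNReal.ofReal (2 ^ (-σ)) * μ (ball x s) := by
    have hfar : 2 * ENNReal.ofReal (3 * s / 4) < ediam (univ : Set X) := by
      refine (ENNReal.mul_lt_mul_iff_right two_ne_zero ofNat_ne_top).1 (lt_of_lt_of_le ?_ hdiam)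
      rw [← ENNReal.ofReal_ofNat 2, ← ENNReal.ofReal_mul zero_le_two,
        ← ENNReal.ofReal_mul zero_le_two, ENNReal.ofReal_lt_ofReal_iff hR]
      linarith
    obtain ⟨y, hy⟩ := exists_dist_eq_of_two_mul_lt_ediam x (by positivity) hfar
    rw [hθσ]
    exact measure_ball_half_le_of_dist_eq μ c hdbl hs hy
  have hmono : Monotone fun t => μ (ball x t) := fun _ _ h => measure_mono (ball_subset_ball h)
  calc μ (ball x r) ≤ ENNReal.ofReal ((2 * r / (R / 4)) ^ σ) * μ (ball x R) :=
        hmono.le_rpow_mul_of_forall_half_le hσ.le (by positivity) hhalf hr hrR.le (by linarith)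
    _ = ENNReal.ofReal (8 ^ σ * (r / R) ^ σ) * μ (ball x R) := by
        rw [← Real.mul_rpow (by norm_num) (by positivity)]
        congr 3
        field_simp
        ring

theorem stmt1 {X : Type*} [MetricSpace X] [MeasurableSpace X] [BorelSpace X]
    [Nontrivial X] [ConnectedSpace X]
    (μ : Measure X)
    (hpos : ∀ (x : X) (r : ℝ), 0 < r → 0 < μ (ball x r))
    (hfin : ∀ (x : X) (r : ℝ), μ (ball x r) < ∞)
    (c : ℝ≥0) (hc : 1 < c)
    (hdbl : ∀ (x : X) (r : ℝ), 0 < r → μ (ball x (2 * r)) ≤ (c : ℝ≥0∞) * μ (ball x r)) :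
    ∃ σ cσ : ℝ, 0 < σ ∧ 0 < cσ ∧
      ∀ (x : X) (r R : ℝ), 0 < r → r < R →
        ENNReal.ofReal R ≤ 2 * EMetric.diam (univ : Set X) →
        μ (ball x r) ≤ ENNReal.ofReal (cσ * (r / R) ^ σ) * μ (ball x R) :=
  stmt1_general μ c hc hdbl
end

section
/- Let 0 < β ≤ 1. If u : X → ℝ is a bounded β-Hölder function with Hajłasz β-gradient g_u, and ψ : X → ℝ is a bounded β-Hölder function with constant κ ≥ 0, then the product uψ is β-Hölder and the function (g_u ‖ψ‖_∞ + κ|u|)·χ_{ψ≠0} is a Hajłasz β-gradient of uψ. -/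
open MeasureTheory Metric Set ENNReal NNReal

/-- `u` is `β`-Hölder with constant `κ`. -/
def IsHolderWith {X : Type*} [MetricSpace X] (κ β : ℝ) (u : X → ℝ) : Prop :=
  ∀ x y, |u x - u y| ≤ κ * dist x y ^ β

/-- `g` is a Hajłasz `β`-gradient of `u`. -/
def IsHajlaszGradient {X : Type*} [MetricSpace X] [MeasurableSpace X]
    (μ : Measure X) (β : ℝ) (u : X → ℝ) (g : X → ℝ≥0∞) : Prop :=
  Measurable g ∧ ∃ N : Set X, μ N = 0 ∧ ∀ x ∉ N, ∀ y ∉ N,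
    ENNReal.ofReal |u x - u y| ≤ ENNReal.ofReal (dist x y ^ β) * (g x + g y)

/-!
Everything rests on `u ψ (x) - u ψ (y) = (u x - u y) ψ x + u y (ψ x - ψ y)`. The first term is
at most `d(x,y)^β (g x + g y) sup |ψ|` and vanishes when `ψ x = 0`; the second is at most
`κ |u y| d(x,y)^β`. Swapping `x` and `y` if necessary, we may assume `ψ y ≠ 0`, so the whole
bound is charged to points where `ψ` does not vanish, which is why the cut-off `χ_{ψ ≠ 0}` costs
nothing. Measurability of the new gradient comes from the continuity of Hölder functions.
-/

theorem abs_mul_sub_mul_le (a b c d : ℝ) : |a * b - c * d| ≤ |a - c| * |b| + |c| * |b - d| := by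
  calc |a * b - c * d| = |(a - c) * b + c * (b - d)| := by ring_nf
    _ ≤ |a - c| * |b| + |c| * |b - d| := by
      rw [← abs_mul, ← abs_mul]
      exact abs_add_le _ _

namespace IsHolderWith

variable {X : Type*} [MetricSpace X] {κ β : ℝ} {u : X → ℝ}

theorem holderWith (hβ : 0 < β) (hu : IsHolderWith κ β u) :
    HolderWith κ.toNNReal β.toNNReal u := by
  intro x y
  rw [edist_dist, edist_dist, Real.coe_toNNReal β hβ.le,
    ENNReal.ofReal_rpow_of_nonneg dist_nonneg hβ.le, ← ENNReal.ofReal_coe_nnreal,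
    ← ENNReal.ofReal_mul (by positivity)]
  exact ENNReal.ofReal_le_ofReal <| (hu x y).trans <|
    mul_le_mul_of_nonneg_right (Real.le_coe_toNNReal κ) (by positivity)

theorem continuous (hβ : 0 < β) (hu : IsHolderWith κ β u) : Continuous u :=
  (hu.holderWith hβ).continuous (Real.toNNReal_pos.2 hβ)

theorem mul {κu Mu Mψ : ℝ} {ψ : X → ℝ} (hu : IsHolderWith κu β u) (hub : ∀ x, |u x| ≤ Mu)
    (hψ : IsHolderWith κ β ψ) (hψb : ∀ x, |ψ x| ≤ Mψ) :
    IsHolderWith (κu * Mψ + κ * Mu) β (fun x => u x * ψ x) := by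
  intro x y
  calc |u x * ψ x - u y * ψ y| ≤ |u x - u y| * |ψ x| + |u y| * |ψ x - ψ y| :=
        abs_mul_sub_mul_le _ _ _ _
    _ ≤ κu * dist x y ^ β * Mψ + Mu * (κ * dist x y ^ β) := by
        gcongr
        · exact (abs_nonneg _).trans (hu x y)
        · exact hu x y
        · exact hψb x
        · exact (abs_nonneg _).trans (hub y)
        · exact hub y
        · exact hψ x y
    _ = (κu * Mψ + κ * Mu) * dist x y ^ β := by ring

end IsHolderWith

section HajlaszGradient

variable {X : Type*} {β κ M : ℝ} {u ψ : X → ℝ} {g : X → ℝ≥0∞}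

/-- Here `M` stands for a bound of `|ψ|` and `κ` for a Hölder constant of `ψ`. -/
noncomputable def productHajlaszGradient (g : X → ℝ≥0∞) (u ψ : X → ℝ) (κ M : ℝ) (x : X) : ℝ≥0∞ :=
  if ψ x ≠ 0 then g x * ENNReal.ofReal M + ENNReal.ofReal (κ * |u x|) else 0

theorem measurable_productHajlaszGradient [MeasurableSpace X] (hg : Measurable g)
    (hu : Measurable u) (hψ : Measurable ψ) : Measurable (productHajlaszGradient g u ψ κ M) := by
  unfold productHajlaszGradient
  exact Measurable.ite (hψ (measurableSet_singleton 0).compl) (by fun_prop) measurable_const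

theorem ofReal_abs_mul_sub_mul_le_of_ne_zero [MetricSpace X] (hψ : IsHolderWith κ β ψ)
    (hM : ∀ x, |ψ x| ≤ M) {x y : X} (hy : ψ y ≠ 0)
    (hxy : ENNReal.ofReal |u x - u y| ≤ ENNReal.ofReal (dist x y ^ β) * (g x + g y)) :
    ENNReal.ofReal |u x * ψ x - u y * ψ y| ≤ ENNReal.ofReal (dist x y ^ β) *
      (productHajlaszGradient g u ψ κ M x + productHajlaszGradient g u ψ κ M y) := by
  set G := productHajlaszGradient g u ψ κ M
  have hsplit : |u x * ψ x - u y * ψ y| ≤ |u x - u y| * |ψ x| + dist x y ^ β * (κ * |u y|) :=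
    calc |u x * ψ x - u y * ψ y| ≤ |u x - u y| * |ψ x| + |u y| * |ψ x - ψ y| :=
          abs_mul_sub_mul_le _ _ _ _
      _ ≤ |u x - u y| * |ψ x| + |u y| * (κ * dist x y ^ β) := by gcongr; exact hψ x y
      _ = |u x - u y| * |ψ x| + dist x y ^ β * (κ * |u y|) := by ring
  have hGy : G y = g y * ENNReal.ofReal M + ENNReal.ofReal (κ * |u y|) := if_pos hy
  by_cases hx : ψ x = 0
  · calc ENNReal.ofReal |u x * ψ x - u y * ψ y|
        ≤ ENNReal.ofReal (dist x y ^ β * (κ * |u y|)) := by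
          refine ENNReal.ofReal_le_ofReal ?_
          simpa [hx] using hsplit
      _ = ENNReal.ofReal (dist x y ^ β) * ENNReal.ofReal (κ * |u y|) :=
          ENNReal.ofReal_mul (by positivity)
      _ ≤ ENNReal.ofReal (dist x y ^ β) * (G x + G y) := by
          gcongr
          rw [hGy]
          exact le_add_left le_add_self
  · have hGx : G x = g x * ENNReal.ofReal M + ENNReal.ofReal (κ * |u x|) := if_pos hx
    calc ENNReal.ofReal |u x * ψ x - u y * ψ y|
        ≤ ENNReal.ofReal (|u x - u y| * M) + ENNReal.ofReal (dist x y ^ β * (κ * |u y|)) := by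
          refine (ENNReal.ofReal_le_ofReal (hsplit.trans ?_)).trans ENNReal.ofReal_add_le
          gcongr
          exact hM x
      _ ≤ ENNReal.ofReal (dist x y ^ β) * (g x + g y) * ENNReal.ofReal M
            + ENNReal.ofReal (dist x y ^ β) * ENNReal.ofReal (κ * |u y|) := by
          rw [ENNReal.ofReal_mul (abs_nonneg _), ENNReal.ofReal_mul (by positivity)]
          gcongr
      _ = ENNReal.ofReal (dist x y ^ β) *
            (g x * ENNReal.ofReal M + (g y * ENNReal.ofReal M + ENNReal.ofReal (κ * |u y|))) := by
          ring
      _ ≤ ENNReal.ofReal (dist x y ^ β) * (G x + G y) := by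
          rw [hGx, hGy]
          gcongr
          exact le_self_add

theorem IsHajlaszGradient.mul_of_isHolderWith [MetricSpace X] [MeasurableSpace X]
    {μ : Measure X} (hgu : IsHajlaszGradient μ β u g)
    (hu : Measurable u) (hψ : IsHolderWith κ β ψ) (hψm : Measurable ψ) (hM : ∀ x, |ψ x| ≤ M) :
    IsHajlaszGradient μ β (fun x => u x * ψ x) (productHajlaszGradient g u ψ κ M) := by
  obtain ⟨hg, N, hN, hgN⟩ := hgu
  refine ⟨measurable_productHajlaszGradient hg hu hψm, N, hN, fun x hx y hy => ?_⟩
  by_cases hψy : ψ y ≠ 0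
  · exact ofReal_abs_mul_sub_mul_le_of_ne_zero hψ hM hψy (hgN x hx y hy)
  by_cases hψx : ψ x ≠ 0
  · rw [abs_sub_comm, dist_comm, add_comm]
    exact ofReal_abs_mul_sub_mul_le_of_ne_zero hψ hM hψx (hgN y hy x hx)
  · simp [not_not.1 hψx, not_not.1 hψy]

end HajlaszGradient

theorem stmt2_general {X : Type*} [MetricSpace X] [MeasurableSpace X] [BorelSpace X]
    (μ : Measure X) (β : ℝ) (hβ : 0 < β)
    (u ψ : X → ℝ) (g_u : X → ℝ≥0∞) (κ Mu Mψ : ℝ)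
    (hu : ∃ κu, IsHolderWith κu β u) (hub : ∀ x, |u x| ≤ Mu)
    (hgu : IsHajlaszGradient μ β u g_u)
    (hψ : IsHolderWith κ β ψ) (hψb : ∀ x, |ψ x| ≤ Mψ) :
    (∃ κ', IsHolderWith κ' β (fun x => u x * ψ x)) ∧
    IsHajlaszGradient μ β (fun x => u x * ψ x)
      (fun x => if ψ x ≠ 0 then
          g_u x * ENNReal.ofReal (sSup (range fun y => |ψ y|)) + ENNReal.ofReal (κ * |u x|)
        else 0) := by
  obtain ⟨κu, hκu⟩ := hu
  have hψ_le_sup : ∀ x, |ψ x| ≤ sSup (range fun y => |ψ y|) :=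
    fun x => le_csSup ⟨Mψ, forall_mem_range.2 hψb⟩ (mem_range_self x)
  exact ⟨⟨_, hκu.mul hub hψ hψb⟩, hgu.mul_of_isHolderWith (hκu.continuous hβ).measurable hψ
    (hψ.continuous hβ).measurable hψ_le_sup⟩

theorem stmt2 {X : Type*} [MetricSpace X] [MeasurableSpace X] [BorelSpace X]
    (μ : Measure X) (β : ℝ) (hβ : 0 < β) (hβ1 : β ≤ 1)
    (u ψ : X → ℝ) (g_u : X → ℝ≥0∞) (κ Mu Mψ : ℝ)
    (hu : ∃ κu, IsHolderWith κu β u) (hub : ∀ x, |u x| ≤ Mu)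
    (hgu : IsHajlaszGradient μ β u g_u)
    (hψ : IsHolderWith κ β ψ) (hκ : 0 ≤ κ) (hψb : ∀ x, |ψ x| ≤ Mψ) :
    (∃ κ', IsHolderWith κ' β (fun x => u x * ψ x)) ∧
    IsHajlaszGradient μ β (fun x => u x * ψ x)
      (fun x => if ψ x ≠ 0 then
          g_u x * ENNReal.ofReal (sSup (range fun y => |ψ y|)) + ENNReal.ofReal (κ * |u x|)
        else 0) :=
  stmt2_general μ β hβ u ψ g_u κ Mu Mψ hu hub hgu hψ hψb
end

section
/- Let 0 < β < η and let f be a nonnegative measurable function on X such that the Riesz potential I_β f(x) = ∫_X f(y) d(x,y)^β / μ(B(x,d(x,y))) dμ(y) is finite everywhere. Assume the kernel estimate: there is c_K > 0 such that for all w ≠ y in X and all z ∈ X ∖ B(w, 2d(w,y)), |d(w,z)^β/μ(B(w,d(w,z))) − d(y,z)^β/μ(B(y,d(y,z)))| ≤ c_K d(w,y)^η / (d(w,z)^{η−β} μ(B(w,d(w,z)))). Then there is a constant C₁ = C(c_μ,β,η,c_K) such that |I_β f(w) − I_β f(y)| ≤ C₁ d(w,y)^β (Mf(w) + Mf(y))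 for every w, y ∈ X; in particular C₁ Mf is a Hajłasz β-gradient of I_β f. -/
/-!
Split `X` at the ball `B = B(w, 2d)`, `d = d(w, y)`. Inside `B` both potentials are bounded
separately: on the dyadic annuli `B(x, 2r) \ B(x, r)` the kernel is at most `r^β / μ(B(x, r))`,
so by doubling each annulus contributes `c r^β Mf(x)`, and these sum geometrically. Outside `B`
the kernel estimate bounds the difference of the kernels by `d^η d(w, z)^(β-η) / μ(B(w, d(w, z)))`,
whose integral against `f` is again a geometric sum over dyadic annuli, now growing outward with
ratio `2^(β-η) < 1`.
-/

open MeasureTheory Metric Set ENNReal NNReal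

/-- The Riesz kernel of order `β`: `d(x,y)^β / μ(B(x,d(x,y)))`. -/
noncomputable def rieszKernel {X : Type*} [MetricSpace X] [MeasurableSpace X]
    (μ : Measure X) (β : ℝ) (x y : X) : ℝ≥0∞ :=
  ENNReal.ofReal (dist x y ^ β) / μ (ball x (dist x y))

/-- The Riesz potential of order `β`. -/
noncomputable def rieszPotential {X : Type*} [MetricSpace X] [MeasurableSpace X]
    (μ : Measure X) (β : ℝ) (f : X → ℝ≥0∞) (x : X) : ℝ≥0∞ :=
  ∫⁻ y, f y * rieszKernel μ β x y ∂μ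

/-- The non-centered Hardy–Littlewood maximal function. -/
noncomputable def maximalFn {X : Type*} [MetricSpace X] [MeasurableSpace X]
    (μ : Measure X) (f : X → ℝ≥0∞) (x : X) : ℝ≥0∞ :=
  ⨆ (c : X) (r : ℝ) (_ : x ∈ ball c r), (μ (ball c r))⁻¹ * ∫⁻ y in ball c r, f y ∂μ

lemma ENNReal.ofReal_abs_toReal_sub_le {a b D : ℝ≥0∞} (ha : a ≠ ∞) (hb : b ≠ ∞)
    (hab : a ≤ b + D) (hba : b ≤ a + D) : ENNReal.ofReal |a.toReal - b.toReal| ≤ D := by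
  rcases eq_or_ne D ∞ with rfl | hD
  · exact le_top
  rw [ofReal_le_iff_le_toReal hD, abs_sub_le_iff]
  constructor <;> linarith [toReal_le_add hab hb hD, toReal_le_add hba ha hD]

lemma ENNReal.inv_one_sub_ofReal_two_rpow_neg_ne_top {s : ℝ} (hs : 0 < s) :
    (1 - ENNReal.ofReal (2 ^ (-s)))⁻¹ ≠ ∞ := by
  have : ENNReal.ofReal (2 ^ (-s)) < 1 :=
    ofReal_lt_one.2 (Real.rpow_lt_one_of_one_lt_of_neg (by norm_num) (neg_neg_of_pos hs))
  exact inv_ne_top.2 (tsub_pos_of_lt this).ne'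

lemma exists_div_two_pow_le_lt {t R : ℝ} (ht : 0 < t) (htR : t < R) :
    ∃ j : ℕ, R / 2 ^ (j + 1) ≤ t ∧ t < R / 2 ^ j := by
  by_contra! h
  have hlt : ∀ j : ℕ, t < R / 2 ^ j := by
    intro j
    induction j with
    | zero => simpa using htR
    | succ j ih => exact lt_of_not_ge fun hj => (h j hj).not_gt ih
  obtain ⟨j, hj⟩ :=
    exists_pow_lt_of_lt_one (div_pos ht (ht.trans htR)) (by norm_num : (1 / 2 : ℝ) < 1)
  rw [one_div_pow, div_lt_div_iff₀ (by positivity) (ht.trans htR), one_mul] at hj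
  exact (hlt j).not_gt ((div_lt_iff₀ (by positivity)).2 hj)

lemma exists_mul_two_pow_le_lt {t R : ℝ} (hR : 0 < R) (hRt : R ≤ t) :
    ∃ j : ℕ, R * 2 ^ j ≤ t ∧ t < R * 2 ^ (j + 1) := by
  obtain ⟨j, h₁, h₂⟩ := exists_nat_pow_near ((one_le_div hR).2 hRt) one_lt_two
  exact ⟨j, (le_div_iff₀' hR).1 h₁, (div_lt_iff₀' hR).1 h₂⟩

section Lintegral

variable {α : Type*} [MeasurableSpace α] {μ : Measure α}

lemma lintegral_le_lintegral_add_of_le_add_on_compl {g₁ g₂ e : α → ℝ≥0∞} (hg₂ : Measurable g₂)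
    {S : Set α} (hS : MeasurableSet S) (h : ∀ z ∈ Sᶜ, g₁ z ≤ g₂ z + e z) :
    ∫⁻ z, g₁ z ∂μ ≤ ∫⁻ z, g₂ z ∂μ + (∫⁻ z in S, g₁ z ∂μ + ∫⁻ z in Sᶜ, e z ∂μ) :=
  calc ∫⁻ z, g₁ z ∂μ = ∫⁻ z in S, g₁ z ∂μ + ∫⁻ z in Sᶜ, g₁ z ∂μ := (lintegral_add_compl _ hS).symm
    _ ≤ ∫⁻ z in S, g₁ z ∂μ + (∫⁻ z in Sᶜ, g₂ z ∂μ + ∫⁻ z in Sᶜ, e z ∂μ) := by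
        rw [← lintegral_add_left hg₂]
        exact add_le_add le_rfl (setLIntegral_mono' hS.compl h)
    _ ≤ ∫⁻ z in S, g₁ z ∂μ + (∫⁻ z, g₂ z ∂μ + ∫⁻ z in Sᶜ, e z ∂μ) :=
        add_le_add le_rfl (add_le_add (setLIntegral_le_lintegral _ _) le_rfl)
    _ = _ := by ring

lemma ofReal_abs_toReal_lintegral_sub_le {g₁ g₂ e : α → ℝ≥0∞} (hg₁ : Measurable g₁)
    (hg₂ : Measurable g₂) (h₁ : ∫⁻ z, g₁ z ∂μ ≠ ∞) (h₂ : ∫⁻ z, g₂ z ∂μ ≠ ∞)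
    {S : Set α} (hS : MeasurableSet S) (h₁₂ : ∀ z ∈ Sᶜ, g₁ z ≤ g₂ z + e z)
    (h₂₁ : ∀ z ∈ Sᶜ, g₂ z ≤ g₁ z + e z) :
    ENNReal.ofReal |(∫⁻ z, g₁ z ∂μ).toReal - (∫⁻ z, g₂ z ∂μ).toReal| ≤
      ∫⁻ z in S, g₁ z ∂μ + ∫⁻ z in S, g₂ z ∂μ + ∫⁻ z in Sᶜ, e z ∂μ := by
  refine ENNReal.ofReal_abs_toReal_sub_le h₁ h₂
    ((lintegral_le_lintegral_add_of_le_add_on_compl hg₂ hS h₁₂).trans ?_)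
    ((lintegral_le_lintegral_add_of_le_add_on_compl hg₁ hS h₂₁).trans ?_) <;> gcongr
  · exact le_self_add
  · exact le_add_self

end Lintegral

section MetricMeasureSpace

variable {X : Type*} [MetricSpace X] [MeasurableSpace X] {μ : Measure X}

lemma average_le_maximalFn (f : X → ℝ≥0∞) {x c : X} {r : ℝ} (hx : x ∈ ball c r) :
    (μ (ball c r))⁻¹ * ∫⁻ y in ball c r, f y ∂μ ≤ maximalFn μ f x :=
  le_iSup_of_le c (le_iSup_of_le r (le_iSup_of_le hx le_rfl))

lemma lowerSemicontinuous_maximalFn (f : X → ℝ≥0∞) : LowerSemicontinuous (maximalFn μ f) := by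
  intro x t ht
  simp only [maximalFn, lt_iSup_iff] at ht
  obtain ⟨c, r, hx, hlt⟩ := ht
  filter_upwards [isOpen_ball.mem_nhds hx] with x' hx'
  exact hlt.trans_le (average_le_maximalFn f hx')

variable [BorelSpace X]

lemma measurable_rieszKernel (β : ℝ) (x : X) : Measurable (rieszKernel μ β x) := by
  have hball : Monotone fun r : ℝ => μ (ball x r) := fun _ _ h => measure_mono (ball_subset_ball h)
  have hdist : Measurable (dist x) := (continuous_const.dist continuous_id).measurable
  exact (hdist.pow_const β).ennreal_ofReal.div (hball.measurable.comp hdist)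

lemma measurable_maximalFn (f : X → ℝ≥0∞) : Measurable (maximalFn μ f) :=
  (lowerSemicontinuous_maximalFn f).measurable

section Doubling

variable {c : ℝ≥0}
  (hdbl : ∀ (x : X) (r : ℝ), 0 < r → μ (ball x (2 * r)) ≤ (c : ℝ≥0∞) * μ (ball x r))
  {f : X → ℝ≥0∞} (hf : Measurable f)
include hdbl hf

lemma setLIntegral_annulus_le (x : X) {r : ℝ} (hr : 0 < r) {G : X → ℝ≥0∞} {b : ℝ≥0∞}
    (hG : ∀ z ∈ ball x (2 * r) \ ball x r, G z ≤ b / μ (ball x r)) :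
    ∫⁻ z in ball x (2 * r) \ ball x r, f z * G z ∂μ ≤ c * b * maximalFn μ f x := by
  rcases eq_or_ne (μ (ball x (2 * r))) 0 with h0 | h0
  · rw [setLIntegral_measure_zero _ _ (measure_mono_null sdiff_subset h0)]
    exact bot_le
  have hinv : (μ (ball x r))⁻¹ ≤ c * (μ (ball x (2 * r)))⁻¹ := by
    rw [← div_eq_mul_inv, ENNReal.le_div_iff_mul_le (Or.inl h0) (Or.inr coe_ne_top), mul_comm,
      ← div_eq_mul_inv]
    exact ENNReal.div_le_of_le_mul (hdbl x r hr)
  calc ∫⁻ z in ball x (2 * r) \ ball x r, f z * G z ∂μ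
      ≤ ∫⁻ z in ball x (2 * r) \ ball x r, f z * (b / μ (ball x r)) ∂μ :=
        setLIntegral_mono' (measurableSet_ball.diff measurableSet_ball) fun z hz => by
          gcongr
          exact hG z hz
    _ ≤ ∫⁻ z in ball x (2 * r), f z * (b / μ (ball x r)) ∂μ := lintegral_mono_set sdiff_subset
    _ = (∫⁻ z in ball x (2 * r), f z ∂μ) * (b * (μ (ball x r))⁻¹) := lintegral_mul_const _ hf
    _ ≤ (∫⁻ z in ball x (2 * r), f z ∂μ) * (b * (c * (μ (ball x (2 * r)))⁻¹)) := by gcongr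
    _ = c * b * ((μ (ball x (2 * r)))⁻¹ * ∫⁻ z in ball x (2 * r), f z ∂μ) := by ring
    _ ≤ c * b * maximalFn μ f x := by
        gcongr
        exact average_le_maximalFn f (mem_ball_self (by positivity))

lemma setLIntegral_iUnion_annulus_le (x : X) {r : ℕ → ℝ} (hr : ∀ j, 0 < r j)
    {G : X → ℝ≥0∞} {a q : ℝ≥0∞}
    (hG : ∀ j, ∀ z ∈ ball x (2 * r j) \ ball x (r j), G z ≤ a * q ^ j / μ (ball x (r j))) :
    ∫⁻ z in ⋃ j, ball x (2 * r j) \ ball x (r j), f z * G z ∂μ ≤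
      c * (1 - q)⁻¹ * a * maximalFn μ f x :=
  calc ∫⁻ z in ⋃ j, ball x (2 * r j) \ ball x (r j), f z * G z ∂μ
      ≤ ∑' j, ∫⁻ z in ball x (2 * r j) \ ball x (r j), f z * G z ∂μ := lintegral_iUnion_le _ _
    _ ≤ ∑' j, c * a * maximalFn μ f x * q ^ j := ENNReal.tsum_le_tsum fun j =>
        (setLIntegral_annulus_le hdbl hf x (hr j) (hG j)).trans_eq (by ring)
    _ = c * (1 - q)⁻¹ * a * maximalFn μ f x := by
        rw [ENNReal.tsum_mul_left, ENNReal.tsum_geometric]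
        ring

lemma setLIntegral_ball_rieszKernel_le {β : ℝ} (hβ : 0 < β) (x : X) {R : ℝ} (hR : 0 < R) :
    ∫⁻ z in ball x R, f z * rieszKernel μ β x z ∂μ ≤
      c * (1 - ENNReal.ofReal (2 ^ (-β)))⁻¹ * ENNReal.ofReal (R ^ β) * maximalFn μ f x := by
  set r : ℕ → ℝ := fun j => R / 2 ^ (j + 1)
  have hr : ∀ j, 2 * r j = R / 2 ^ j := fun j => by
    simp only [r, pow_succ]
    field_simp
  have hcover : ball x R ⊆ {x} ∪ ⋃ j, ball x (2 * r j) \ ball x (r j) := by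
    intro z hz
    rcases eq_or_ne z x with rfl | hzx
    · exact .inl rfl
    obtain ⟨j, h₁, h₂⟩ := exists_div_two_pow_le_lt (dist_pos.2 hzx) (mem_ball.1 hz)
    exact .inr (mem_iUnion.2 ⟨j, mem_ball.2 (by rwa [hr]), fun h => (mem_ball.1 h).not_ge h₁⟩)
  have hkernel : ∀ j, ∀ z ∈ ball x (2 * r j) \ ball x (r j), rieszKernel μ β x z ≤
      ENNReal.ofReal (R ^ β) * ENNReal.ofReal (2 ^ (-β)) ^ j / μ (ball x (r j)) := by
    rintro j z ⟨hz₂, hz₁⟩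
    rw [mem_ball, dist_comm, hr] at hz₂
    rw [mem_ball, dist_comm, not_lt] at hz₁
    have hpow : (R / 2 ^ j) ^ β = R ^ β * (2 ^ (-β)) ^ j := by
      rw [Real.div_rpow hR.le (by positivity), ← Real.rpow_pow_comm zero_le_two,
        Real.rpow_neg zero_le_two, inv_pow, div_eq_mul_inv]
    rw [← ofReal_pow (by positivity), ← ofReal_mul (by positivity), ← hpow]
    exact ENNReal.div_le_div (ofReal_le_ofReal (Real.rpow_le_rpow dist_nonneg hz₂.le hβ.le))
      (measure_mono (ball_subset_ball hz₁))
  calc ∫⁻ z in ball x R, f z * rieszKernel μ β x z ∂μ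
      ≤ ∫⁻ z in {x} ∪ ⋃ j, ball x (2 * r j) \ ball x (r j), f z * rieszKernel μ β x z ∂μ :=
        lintegral_mono_set hcover
    _ ≤ ∫⁻ z in {x}, f z * rieszKernel μ β x z ∂μ +
          ∫⁻ z in ⋃ j, ball x (2 * r j) \ ball x (r j), f z * rieszKernel μ β x z ∂μ :=
        lintegral_union_le _ _ _
    _ = ∫⁻ z in ⋃ j, ball x (2 * r j) \ ball x (r j), f z * rieszKernel μ β x z ∂μ := by
        simp [rieszKernel, Real.zero_rpow hβ.ne']
    _ ≤ _ := setLIntegral_iUnion_annulus_le hdbl hf x (fun j => by positivity) hkernel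

lemma setLIntegral_compl_ball_rpow_neg_le {γ : ℝ} (hγ : 0 < γ) (x : X) {R : ℝ} (hR : 0 < R) :
    ∫⁻ z in (ball x R)ᶜ, f z * (ENNReal.ofReal (dist x z ^ (-γ)) / μ (ball x (dist x z))) ∂μ ≤
      c * (1 - ENNReal.ofReal (2 ^ (-γ)))⁻¹ * ENNReal.ofReal (R ^ (-γ)) * maximalFn μ f x := by
  set r : ℕ → ℝ := fun j => R * 2 ^ j
  have hcover : (ball x R)ᶜ ⊆ ⋃ j, ball x (2 * r j) \ ball x (r j) := by
    intro z hz
    obtain ⟨j, h₁, h₂⟩ := exists_mul_two_pow_le_lt hR (not_lt.1 hz)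
    refine mem_iUnion.2 ⟨j, mem_ball.2 ?_, fun h => (mem_ball.1 h).not_ge h₁⟩
    rwa [pow_succ, ← mul_assoc, mul_comm _ (2 : ℝ)] at h₂
  have hkernel : ∀ j, ∀ z ∈ ball x (2 * r j) \ ball x (r j),
      ENNReal.ofReal (dist x z ^ (-γ)) / μ (ball x (dist x z)) ≤
        ENNReal.ofReal (R ^ (-γ)) * ENNReal.ofReal (2 ^ (-γ)) ^ j / μ (ball x (r j)) := by
    rintro j z ⟨-, hz⟩
    rw [mem_ball, dist_comm, not_lt] at hz
    have hpow : (R * 2 ^ j) ^ (-γ) = R ^ (-γ) * (2 ^ (-γ)) ^ j := by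
      rw [Real.mul_rpow hR.le (by positivity), ← Real.rpow_pow_comm zero_le_two]
    rw [← ofReal_pow (by positivity), ← ofReal_mul (by positivity), ← hpow]
    exact ENNReal.div_le_div
      (ofReal_le_ofReal (Real.rpow_le_rpow_of_nonpos (by positivity) hz (neg_nonpos.2 hγ.le)))
      (measure_mono (ball_subset_ball hz))
  exact (lintegral_mono_set hcover).trans
    (setLIntegral_iUnion_annulus_le hdbl hf x (fun j => by positivity) hkernel)

lemma setLIntegral_compl_ball_kernelError_le {β η : ℝ} (hβη : β < η) (cK : ℝ) (w : X) {d : ℝ}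
    (hd : 0 < d) :
    ∫⁻ z in (ball w (2 * d))ᶜ,
        f z * (ENNReal.ofReal (cK * d ^ η / dist w z ^ (η - β)) / μ (ball w (dist w z))) ∂μ ≤
      c * (1 - ENNReal.ofReal (2 ^ (-(η - β))))⁻¹ * ENNReal.ofReal (cK * 2 ^ (-(η - β))) *
        ENNReal.ofReal (d ^ β) * maximalFn μ f w := by
  have hsplit : ∀ z, f z * (ENNReal.ofReal (cK * d ^ η / dist w z ^ (η - β)) /
      μ (ball w (dist w z))) = ENNReal.ofReal (cK * d ^ η) *
        (f z * (ENNReal.ofReal (dist w z ^ (-(η - β))) / μ (ball w (dist w z)))) := fun z => by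
    rw [Real.rpow_neg dist_nonneg, div_eq_mul_inv (cK * d ^ η), ofReal_mul' (by positivity),
      div_eq_mul_inv, div_eq_mul_inv]
    ring
  have hconst : ENNReal.ofReal (cK * d ^ η) * ENNReal.ofReal ((2 * d) ^ (-(η - β))) =
      ENNReal.ofReal (cK * 2 ^ (-(η - β))) * ENNReal.ofReal (d ^ β) := by
    rw [← ofReal_mul' (by positivity), ← ofReal_mul' (by positivity),
      Real.mul_rpow zero_le_two hd.le]
    congr 1
    have : d ^ η * d ^ (-(η - β)) = d ^ β := by rw [← Real.rpow_add hd]; ring_nf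
    rw [← this]
    ring
  simp_rw [hsplit]
  rw [lintegral_const_mul' _ _ ofReal_ne_top]
  calc _ ≤ ENNReal.ofReal (cK * d ^ η) * (c * (1 - ENNReal.ofReal (2 ^ (-(η - β))))⁻¹ *
          ENNReal.ofReal ((2 * d) ^ (-(η - β))) * maximalFn μ f w) := by
        gcongr
        exact setLIntegral_compl_ball_rpow_neg_le hdbl hf (sub_pos.2 hβη) w (by positivity)
    _ = c * (1 - ENNReal.ofReal (2 ^ (-(η - β))))⁻¹ *
          (ENNReal.ofReal (cK * d ^ η) * ENNReal.ofReal ((2 * d) ^ (-(η - β)))) *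
            maximalFn μ f w := by ring
    _ = _ := by
        rw [hconst]
        ring

end Doubling

/-- `3 ^ β` because `B(w, 2d) ⊆ B(y, 3d)`; the second summand bounds the far field. -/
noncomputable def rieszGradientConst (c : ℝ≥0) (β η cK : ℝ) : ℝ≥0∞ :=
  c * (1 - ENNReal.ofReal (2 ^ (-β)))⁻¹ * ENNReal.ofReal (3 ^ β) +
    c * (1 - ENNReal.ofReal (2 ^ (-(η - β))))⁻¹ * ENNReal.ofReal (cK * 2 ^ (-(η - β)))

lemma rieszGradientConst_ne_top (c : ℝ≥0) {β η : ℝ} (hβ : 0 < β) (hβη : β < η) (cK : ℝ) :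
    rieszGradientConst c β η cK ≠ ∞ := by
  have h₁ := ENNReal.inv_one_sub_ofReal_two_rpow_neg_ne_top hβ
  have h₂ := ENNReal.inv_one_sub_ofReal_two_rpow_neg_ne_top (sub_pos.2 hβη)
  unfold rieszGradientConst
  finiteness

lemma ofReal_abs_sub_rieszPotential_le {c : ℝ≥0}
    (hdbl : ∀ (x : X) (r : ℝ), 0 < r → μ (ball x (2 * r)) ≤ (c : ℝ≥0∞) * μ (ball x r))
    {β η : ℝ} (hβ : 0 < β) (hβη : β < η) {f : X → ℝ≥0∞} (hf : Measurable f)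
    (hfin : ∀ x, rieszPotential μ β f x ≠ ∞) {cK : ℝ}
    (hker : ∀ w y : X, w ≠ y → ∀ z ∉ ball w (2 * dist w y),
      rieszKernel μ β w z ≤ rieszKernel μ β y z +
        ENNReal.ofReal (cK * dist w y ^ η / dist w z ^ (η - β)) / μ (ball w (dist w z)) ∧
      rieszKernel μ β y z ≤ rieszKernel μ β w z +
        ENNReal.ofReal (cK * dist w y ^ η / dist w z ^ (η - β)) / μ (ball w (dist w z)))
    (w y : X) :
    ENNReal.ofReal |(rieszPotential μ β f w).toReal - (rieszPotential μ β f y).toReal| ≤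
      rieszGradientConst c β η cK * ENNReal.ofReal (dist w y ^ β) *
        (maximalFn μ f w + maximalFn μ f y) := by
  rcases eq_or_ne w y with rfl | hwy
  · simp
  set d := dist w y
  have hd : 0 < d := dist_pos.2 hwy
  set E : X → ℝ≥0∞ := fun z =>
    ENNReal.ofReal (cK * d ^ η / dist w z ^ (η - β)) / μ (ball w (dist w z))
  have hcompare : ∀ z ∈ (ball w (2 * d))ᶜ,
      f z * rieszKernel μ β w z ≤ f z * rieszKernel μ β y z + f z * E z ∧
      f z * rieszKernel μ β y z ≤ f z * rieszKernel μ β w z + f z * E z := fun z hz => by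
    obtain ⟨h₁, h₂⟩ := hker w y hwy z hz
    rw [← mul_add, ← mul_add]
    exact ⟨by gcongr, by gcongr⟩
  set S₁ := (1 - ENNReal.ofReal (2 ^ (-β)))⁻¹
  set S₂ := (1 - ENNReal.ofReal (2 ^ (-(η - β))))⁻¹
  set D := ENNReal.ofReal (d ^ β)
  have hnear : ∀ x, ball w (2 * d) ⊆ ball x (3 * d) → ∫⁻ z in ball w (2 * d),
      f z * rieszKernel μ β x z ∂μ ≤ c * S₁ * ENNReal.ofReal (3 ^ β) * D * maximalFn μ f x :=
    fun x hsub => by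
      have h3d : ENNReal.ofReal (3 ^ β) * D = ENNReal.ofReal ((3 * d) ^ β) := by
        rw [← ofReal_mul (by positivity), Real.mul_rpow (by norm_num) hd.le]
      rw [mul_assoc (↑c * S₁), h3d]
      exact (lintegral_mono_set hsub).trans
        (setLIntegral_ball_rieszKernel_le hdbl hf hβ x (by positivity))
  have hnear_w := hnear w (ball_subset_ball (by linarith))
  have hnear_y := hnear y (ball_subset_ball' (by linarith))
  have hfar := setLIntegral_compl_ball_kernelError_le hdbl hf hβη cK w hd
  refine (ofReal_abs_toReal_lintegral_sub_le (g₁ := fun z => f z * rieszKernel μ β w z)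
    (g₂ := fun z => f z * rieszKernel μ β y z) (hf.mul (measurable_rieszKernel β w))
    (hf.mul (measurable_rieszKernel β y)) (hfin w) (hfin y) measurableSet_ball
    (fun z hz => (hcompare z hz).1) (fun z hz => (hcompare z hz).2)).trans ?_
  calc _ ≤ c * S₁ * ENNReal.ofReal (3 ^ β) * D * maximalFn μ f w +
          c * S₁ * ENNReal.ofReal (3 ^ β) * D * maximalFn μ f y +
          c * S₂ * ENNReal.ofReal (cK * 2 ^ (-(η - β))) * D * maximalFn μ f w := by
        gcongr
    _ ≤ c * S₁ * ENNReal.ofReal (3 ^ β) * D * maximalFn μ f w +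
          c * S₁ * ENNReal.ofReal (3 ^ β) * D * maximalFn μ f y +
          c * S₂ * ENNReal.ofReal (cK * 2 ^ (-(η - β))) * D * maximalFn μ f w +
          c * S₂ * ENNReal.ofReal (cK * 2 ^ (-(η - β))) * D * maximalFn μ f y := le_self_add
    _ = _ := by
        rw [rieszGradientConst]
        ring

end MetricMeasureSpace

theorem stmt5_general {X : Type*} [MetricSpace X] [MeasurableSpace X] [BorelSpace X]
    (μ : Measure X)
    (c : ℝ≥0)
    (hdbl : ∀ (x : X) (r : ℝ), 0 < r → μ (ball x (2 * r)) ≤ (c : ℝ≥0∞) * μ (ball x r))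
    (β η : ℝ) (hβ : 0 < β) (hβη : β < η)
    (f : X → ℝ≥0∞) (hf : Measurable f)
    (hfin' : ∀ x, rieszPotential μ β f x ≠ ∞)
    (cK : ℝ)
    (hker : ∀ w y : X, w ≠ y → ∀ z ∉ ball w (2 * dist w y),
      rieszKernel μ β w z ≤ rieszKernel μ β y z +
        ENNReal.ofReal (cK * dist w y ^ η / dist w z ^ (η - β)) / μ (ball w (dist w z)) ∧
      rieszKernel μ β y z ≤ rieszKernel μ β w z +
        ENNReal.ofReal (cK * dist w y ^ η / dist w z ^ (η - β)) / μ (ball w (dist w z))) :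
    ∃ C₁ : ℝ≥0, 0 < C₁ ∧
      (∀ w y : X,
        ENNReal.ofReal |(rieszPotential μ β f w).toReal - (rieszPotential μ β f y).toReal| ≤
          (C₁ : ℝ≥0∞) * ENNReal.ofReal (dist w y ^ β) * (maximalFn μ f w + maximalFn μ f y)) ∧
      IsHajlaszGradient μ β (fun x => (rieszPotential μ β f x).toReal)
        (fun x => (C₁ : ℝ≥0∞) * maximalFn μ f x) := by
  set C₁ : ℝ≥0 := (rieszGradientConst c β η cK).toNNReal + 1
  have hC₁ : rieszGradientConst c β η cK ≤ C₁ := by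
    rw [ENNReal.coe_add, coe_toNNReal (rieszGradientConst_ne_top c hβ hβη cK)]
    exact le_self_add
  have hbound : ∀ w y : X,
      ENNReal.ofReal |(rieszPotential μ β f w).toReal - (rieszPotential μ β f y).toReal| ≤
        C₁ * ENNReal.ofReal (dist w y ^ β) * (maximalFn μ f w + maximalFn μ f y) := fun w y =>
    (ofReal_abs_sub_rieszPotential_le hdbl hβ hβη hf hfin' hker w y).trans (by gcongr)
  exact ⟨C₁, by positivity, hbound, (measurable_maximalFn f).const_mul _, ∅, measure_empty,
    fun x _ y _ => (hbound x y).trans_eq (by ring)⟩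

theorem stmt5 {X : Type*} [MetricSpace X] [MeasurableSpace X] [BorelSpace X]
    (μ : Measure X)
    (hpos : ∀ (x : X) (r : ℝ), 0 < r → 0 < μ (ball x r))
    (hfin : ∀ (x : X) (r : ℝ), μ (ball x r) < ∞)
    (c : ℝ≥0) (hc : 1 < c)
    (hdbl : ∀ (x : X) (r : ℝ), 0 < r → μ (ball x (2 * r)) ≤ (c : ℝ≥0∞) * μ (ball x r))
    (β η : ℝ) (hβ : 0 < β) (hβη : β < η)
    (f : X → ℝ≥0∞) (hf : Measurable f)
    (hfin' : ∀ x, rieszPotential μ β f x ≠ ∞)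
    (cK : ℝ) (hcK : 0 < cK)
    (hker : ∀ w y : X, w ≠ y → ∀ z ∉ ball w (2 * dist w y),
      rieszKernel μ β w z ≤ rieszKernel μ β y z +
        ENNReal.ofReal (cK * dist w y ^ η / dist w z ^ (η - β)) / μ (ball w (dist w z)) ∧
      rieszKernel μ β y z ≤ rieszKernel μ β w z +
        ENNReal.ofReal (cK * dist w y ^ η / dist w z ^ (η - β)) / μ (ball w (dist w z))) :
    ∃ C₁ : ℝ≥0, 0 < C₁ ∧
      (∀ w y : X,
        ENNReal.ofReal |(rieszPotential μ β f w).toReal - (rieszPotential μ β f y).toReal| ≤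
          (C₁ : ℝ≥0∞) * ENNReal.ofReal (dist w y ^ β) * (maximalFn μ f w + maximalFn μ f y)) ∧
      IsHajlaszGradient μ β (fun x => (rieszPotential μ β f x).toReal)
        (fun x => (C₁ : ℝ≥0∞) * maximalFn μ f x) :=
  stmt5_general μ c hdbl β η hβ hβη f hf hfin' cK hker
end

section
/- Suppose μ is a Q-uniform measure on X for some Q > 0, i.e. μ(B(x,r)) = C₁ r^Q for all x ∈ X and r > 0 with a fixed constant C₁ > 0. If 0 < β < min{Q,1}, then the kernel estimate holds with η = 1: there is c_K > 0 such that for all w ≠ y in X and all z ∈ X ∖ B(w, 2d(w,y)), |d(w,z)^β/μ(B(w,d(w,z))) − d(y,z)^β/μ(B(y,d(y,z)))| ≤ c_K d(w,y) / (d(w,z)^{1−β} μ(B(w,d(w,z)))). -/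
open MeasureTheory Metric Set ENNReal NNReal

/-!
For a `Q`-uniform measure the kernel is `d(x,y)^(β-Q) / C₁`, so the estimate is a Lipschitz bound
for `t ↦ t^(β-Q)`. By the mean value theorem this function is `(Q-β) m^(β-Q-1)`-Lipschitz on
`[m, ∞)`, and `z ∉ B(w, 2d(w,y))` keeps both `d(w,z)` and `d(y,z)` above `m = d(w,z)/2`.
-/

namespace Real

theorem abs_rpow_sub_rpow_le_of_le {γ m s t : ℝ} (hγ : γ ≤ 0) (hm : 0 < m) (hs : m ≤ s)
    (ht : m ≤ t) : |s ^ γ - t ^ γ| ≤ -γ * m ^ (γ - 1) * |s - t| := by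
  have hderiv : ∀ x ∈ Ici m, HasDerivWithinAt (· ^ γ) (γ * x ^ (γ - 1)) (Ici m) x :=
    fun x hx => (hasDerivAt_rpow_const (Or.inl (hm.trans_le hx).ne')).hasDerivWithinAt
  have hbound : ∀ x ∈ Ici m, ‖γ * x ^ (γ - 1)‖ ≤ -γ * m ^ (γ - 1) := by
    intro x hx
    rw [norm_mul, norm_of_nonpos hγ, norm_of_nonneg (rpow_nonneg (hm.le.trans hx) _)]
    exact mul_le_mul_of_nonneg_left (rpow_le_rpow_of_nonpos hm hx (by linarith)) (by linarith)
  exact (convex_Ici m).norm_image_sub_le_of_norm_hasDerivWithin_le hderiv hbound ht hs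

theorem abs_rpow_sub_rpow_le_of_half_le {γ s t : ℝ} (hγ : γ ≤ 0) (hs : 0 < s) (hst : s ≤ 2 * t) :
    |s ^ γ - t ^ γ| ≤ -γ * 2 ^ (1 - γ) * s ^ (γ - 1) * |s - t| := by
  have hhalf : (s / 2) ^ (γ - 1) = 2 ^ (1 - γ) * s ^ (γ - 1) := by
    rw [div_rpow hs.le zero_le_two, div_eq_mul_inv, ← rpow_neg zero_le_two, neg_sub, mul_comm]
  calc |s ^ γ - t ^ γ| ≤ -γ * (s / 2) ^ (γ - 1) * |s - t| :=
        abs_rpow_sub_rpow_le_of_le hγ (half_pos hs) (half_le_self hs.le) (by linarith)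
    _ = -γ * 2 ^ (1 - γ) * s ^ (γ - 1) * |s - t| := by rw [hhalf]; ring

end Real

theorem dist_le_two_mul_dist_of_two_mul_dist_le {X : Type*} [PseudoMetricSpace X] {w y z : X}
    (h : 2 * dist w y ≤ dist w z) : dist w z ≤ 2 * dist y z := by
  linarith [dist_triangle w y z]

section UniformMeasure

variable {X : Type*} [MetricSpace X] [MeasurableSpace X]

def IsUniformMeasure (μ : Measure X) (Q C₁ : ℝ) : Prop :=
  ∀ (x : X) (r : ℝ), 0 < r → μ (ball x r) = ENNReal.ofReal (C₁ * r ^ Q)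

variable {μ : Measure X} {Q C₁ : ℝ}

theorem IsUniformMeasure.ofReal_div_measure_ball_eq (hμ : IsUniformMeasure μ Q C₁) (hC₁ : 0 < C₁)
    (a : ℝ) (x : X) {r : ℝ} (hr : 0 < r) :
    ENNReal.ofReal a / μ (ball x r) = ENNReal.ofReal (r ^ (-Q) * a / C₁) := by
  rw [hμ x r hr, ← ENNReal.ofReal_div_of_pos (by positivity), Real.rpow_neg hr.le]
  field_simp

theorem IsUniformMeasure.rieszKernel_eq (hμ : IsUniformMeasure μ Q C₁) (hC₁ : 0 < C₁)
    (β : ℝ) {x y : X} (hxy : x ≠ y) :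
    rieszKernel μ β x y = ENNReal.ofReal (dist x y ^ (β - Q) / C₁) := by
  have hd := dist_pos.2 hxy
  rw [rieszKernel, hμ.ofReal_div_measure_ball_eq hC₁ _ _ hd, ← Real.rpow_add hd,
    neg_add_eq_sub]

end UniformMeasure

theorem stmt6_general {X : Type*} [MetricSpace X] [MeasurableSpace X]
    (μ : Measure X) (Q C₁ : ℝ) (hC₁ : 0 < C₁)
    (hunif : ∀ (x : X) (r : ℝ), 0 < r → μ (ball x r) = ENNReal.ofReal (C₁ * r ^ Q))
    (β : ℝ) (hβQ : β < Q) :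
    ∃ cK : ℝ, 0 < cK ∧
      ∀ w y : X, w ≠ y → ∀ z ∉ ball w (2 * dist w y),
        rieszKernel μ β w z ≤ rieszKernel μ β y z +
          ENNReal.ofReal (cK * dist w y / dist w z ^ (1 - β)) / μ (ball w (dist w z)) ∧
        rieszKernel μ β y z ≤ rieszKernel μ β w z +
          ENNReal.ofReal (cK * dist w y / dist w z ^ (1 - β)) / μ (ball w (dist w z)) := by
  have hμ : IsUniformMeasure μ Q C₁ := hunif
  set γ := β - Q
  have hγ : γ < 0 := by linarith
  have hcK : 0 < -γ * 2 ^ (1 - γ) := mul_pos (neg_pos.2 hγ) (by positivity)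
  refine ⟨-γ * 2 ^ (1 - γ), hcK, fun w y hwy z hz => ?_⟩
  have hfar : 2 * dist w y ≤ dist w z := not_lt.1 fun h => hz (mem_ball'.2 h)
  have hwz_pos : 0 < dist w z := by linarith [dist_pos.2 hwy]
  have hwz_le := dist_le_two_mul_dist_of_two_mul_dist_le hfar
  have hyz : y ≠ z := dist_pos.1 (by linarith)
  have hlip : |dist w z ^ γ - dist y z ^ γ| ≤ -γ * 2 ^ (1 - γ) * dist w z ^ (γ - 1) * dist w y :=
    (Real.abs_rpow_sub_rpow_le_of_half_le hγ.le hwz_pos hwz_le).trans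
      (mul_le_mul_of_nonneg_left (abs_dist_sub_le w y z) (by positivity))
  have herr : ENNReal.ofReal (-γ * 2 ^ (1 - γ) * dist w y / dist w z ^ (1 - β))
        / μ (ball w (dist w z))
      = ENNReal.ofReal (-γ * 2 ^ (1 - γ) * dist w z ^ (γ - 1) * dist w y / C₁) := by
    rw [hμ.ofReal_div_measure_ball_eq hC₁ _ _ hwz_pos,
      show γ - 1 = -Q - (1 - β) by ring, Real.rpow_sub hwz_pos (-Q)]
    congr 1
    ring
  rw [hμ.rieszKernel_eq hC₁ β (dist_pos.1 hwz_pos), hμ.rieszKernel_eq hC₁ β hyz, herr]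
  obtain ⟨hlower, hupper⟩ := abs_le.1 hlip
  constructor <;>
  · refine (ENNReal.ofReal_le_ofReal ?_).trans ENNReal.ofReal_add_le
    rw [← add_div]
    exact div_le_div_of_nonneg_right (by linarith) hC₁.le

theorem stmt6 {X : Type*} [MetricSpace X] [MeasurableSpace X] [BorelSpace X]
    (μ : Measure X) (Q C₁ : ℝ) (hQ : 0 < Q) (hC₁ : 0 < C₁)
    (hunif : ∀ (x : X) (r : ℝ), 0 < r → μ (ball x r) = ENNReal.ofReal (C₁ * r ^ Q))
    (β : ℝ) (hβ : 0 < β) (hβQ : β < Q) (hβ1 : β < 1) :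
    ∃ cK : ℝ, 0 < cK ∧
      ∀ w y : X, w ≠ y → ∀ z ∉ ball w (2 * dist w y),
        rieszKernel μ β w z ≤ rieszKernel μ β y z +
          ENNReal.ofReal (cK * dist w y / dist w z ^ (1 - β)) / μ (ball w (dist w z)) ∧
        rieszKernel μ β y z ≤ rieszKernel μ β w z +
          ENNReal.ofReal (cK * dist w y / dist w z ^ (1 - β)) / μ (ball w (dist w z)) :=
  stmt6_general μ Q C₁ hC₁ hunif β hβQ
end

section
/- Assume X is connected, 1 ≤ p < ∞ and 0 < β ≤ 1. Then there is a constant C = C(c_μ,p) > 0 such that C^{−1} r^{−βp} μ(B(x,r)) ≤ cap_{β,p}(closure of B(x,r), B(x,2r)) ≤ C r^{−βp} μ(B(x,r)) for all x ∈ X and all 0 < r < (1/8) diam(X), where cap_{β,p} denotes the variational Hajłasz (β,p)-capacity. The upper bound holds even without connectivity. -/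
open MeasureTheory Metric Set ENNReal NNReal

/-- The variational Hajłasz `(β,p)`-capacity of `F` relative to `Ω`. -/
noncomputable def hajlaszCapacity {X : Type*} [MetricSpace X] [MeasurableSpace X]
    (μ : Measure X) (β p : ℝ) (F Ω : Set X) : ℝ≥0∞ :=
  sInf { t | ∃ u : X → ℝ, (∃ κ : ℝ, IsHolderWith κ β u) ∧
    (∀ x ∈ F, 1 ≤ u x) ∧ (∀ x ∉ Ω, u x = 0) ∧
    ∃ g : X → ℝ≥0∞, IsHajlaszGradient μ β u g ∧ t = ∫⁻ x, g x ^ p ∂μ }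

/-!
For the upper bound, the cut-off `min 1 (max 0 (2 - d(·, x) / r))` is `r^(-β)`-Hölder, so the
constant `r^(-β)` on `B(x, 2r)` is a Hajłasz gradient of it; doubling then compares
`μ(B(x, 2r))` with `μ(B(x, r))`.

For the lower bound, connectedness and `8r < diam X` give a point `z` with `d(x, z) = 3r`.
An admissible `u` is `≥ 1` on `B(x, r)` and vanishes on `B(z, r)`, and points of the two balls
are at distance at most `5r`, so a Hajłasz gradient satisfies `g y + g w ≥ (5r)^(-β)` off a null
set. Hence `g ≥ (5r)^(-β) / 2` almost everywhere on one of the two balls, whose measures are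
comparable by doubling twice.
-/

lemma min_one_le_rpow {t β : ℝ} (ht : 0 ≤ t) (hβ : 0 ≤ β) (hβ1 : β ≤ 1) :
    min 1 t ≤ t ^ β := by
  rcases le_or_gt t 1 with h | h
  · exact (min_le_right _ _).trans (Real.self_le_rpow_of_le_one ht h hβ1)
  · exact (min_le_left _ _).trans (Real.one_le_rpow h.le hβ)

section Cutoff

variable {X : Type*} [MetricSpace X]

noncomputable def ballCutoff (x : X) (r : ℝ) (y : X) : ℝ :=
  min 1 (max 0 (2 - dist y x / r))

lemma ballCutoff_mem_Icc (x : X) (r : ℝ) (y : X) : ballCutoff x r y ∈ Icc 0 1 :=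
  ⟨le_min zero_le_one (le_max_left _ _), min_le_left _ _⟩

lemma abs_ballCutoff_sub_le {r : ℝ} (hr : 0 < r) (x y z : X) :
    |ballCutoff x r y - ballCutoff x r z| ≤ dist y z / r := by
  calc |ballCutoff x r y - ballCutoff x r z|
      ≤ max |1 - 1| |max 0 (2 - dist y x / r) - max 0 (2 - dist z x / r)| :=
        abs_min_sub_min_le_max _ _ _ _
    _ ≤ max |(1 : ℝ) - 1| (max |(0 : ℝ) - 0| |(2 - dist y x / r) - (2 - dist z x / r)|) := by
        gcongr; exact abs_max_sub_max_le_max _ _ _ _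
    _ = |dist z x - dist y x| / r := by
        rw [show (2 - dist y x / r) - (2 - dist z x / r) = (dist z x - dist y x) / r by ring]
        simp [abs_div, abs_of_pos hr, div_nonneg, hr.le]
    _ ≤ dist y z / r := by
        gcongr
        rw [dist_comm y z]
        exact abs_dist_sub_le z y x

lemma isHolderWith_ballCutoff {r β : ℝ} (hr : 0 < r) (hβ : 0 ≤ β) (hβ1 : β ≤ 1) (x : X) :
    IsHolderWith (r ^ (-β)) β (ballCutoff x r) := by
  intro y z
  obtain ⟨hy0, hy1⟩ := ballCutoff_mem_Icc x r y
  obtain ⟨hz0, hz1⟩ := ballCutoff_mem_Icc x r z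
  calc |ballCutoff x r y - ballCutoff x r z|
      ≤ min 1 (dist y z / r) :=
        le_min (abs_sub_le_of_nonneg_of_le hy0 hy1 hz0 hz1) (abs_ballCutoff_sub_le hr x y z)
    _ ≤ (dist y z / r) ^ β := min_one_le_rpow (by positivity) hβ hβ1
    _ = r ^ (-β) * dist y z ^ β := by
        rw [Real.div_rpow dist_nonneg hr.le, Real.rpow_neg hr.le, div_eq_inv_mul]

lemma one_le_ballCutoff {x y : X} {r : ℝ} (hr : 0 < r) (hy : y ∈ closure (ball x r)) :
    1 ≤ ballCutoff x r y := by
  have : dist y x / r ≤ 1 := div_le_one_of_le₀ (closure_ball_subset_closedBall hy) hr.le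
  exact le_min le_rfl (le_max_of_le_right (by linarith))

lemma ballCutoff_eq_zero {x y : X} {r : ℝ} (hr : 0 < r) (hy : y ∉ ball x (2 * r)) :
    ballCutoff x r y = 0 := by
  have : 2 ≤ dist y x / r := (le_div_iff₀ hr).mpr (by simpa [mem_ball] using hy)
  simp [ballCutoff, max_eq_left (show 2 - dist y x / r ≤ 0 by linarith)]

end Cutoff

lemma ofReal_rpow_neg_le_add {X : Type*} [MetricSpace X] {β D : ℝ} {v : X → ℝ}
    {g : X → ℝ≥0∞} {N : Set X} {y z : X} (hD : 0 < D) (hβ : 0 ≤ β)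
    (hgrad : ∀ x ∉ N, ∀ x' ∉ N,
      ENNReal.ofReal |v x - v x'| ≤ ENNReal.ofReal (dist x x' ^ β) * (g x + g x'))
    (hy : y ∉ N) (hz : z ∉ N) (hjump : 1 ≤ |v y - v z|) (hyz : dist y z ≤ D) :
    ENNReal.ofReal (D ^ (-β)) ≤ g y + g z := by
  have h1 : 1 ≤ ENNReal.ofReal (D ^ β) * (g y + g z) :=
    calc 1 ≤ ENNReal.ofReal |v y - v z| := by simpa using ENNReal.ofReal_le_ofReal hjump
      _ ≤ ENNReal.ofReal (dist y z ^ β) * (g y + g z) := hgrad y hy z hz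
      _ ≤ ENNReal.ofReal (D ^ β) * (g y + g z) := by gcongr
  rwa [Real.rpow_neg hD.le, ENNReal.ofReal_inv_of_pos (by positivity),
    ENNReal.inv_le_iff_le_mul
      (fun _ => (ENNReal.ofReal_pos.2 (Real.rpow_pos_of_pos hD β)).ne') (by simp)]

lemma mul_measure_le_lintegral_rpow {α : Type*} [MeasurableSpace α] {μ : Measure α} {p : ℝ}
    {g : α → ℝ≥0∞} {A N : Set α} {t : ℝ≥0∞}
    (hg : Measurable g) (hN : μ N = 0) (hp : 0 ≤ p) (hA : ∀ y ∈ A, y ∉ N → t ≤ g y) :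
    t ^ p * μ A ≤ ∫⁻ y, g y ^ p ∂μ :=
  calc t ^ p * μ A ≤ t ^ p * μ {y | t ^ p ≤ g y ^ p} := by
        refine mul_le_mul_right (measure_mono_ae ?_) _
        filter_upwards [(measure_eq_zero_iff_ae_notMem.1 hN : ∀ᵐ y ∂μ, y ∉ N)]
          with y hyN hyA
        exact ENNReal.rpow_le_rpow (hA y hyA hyN) hp
    _ ≤ ∫⁻ y, g y ^ p ∂μ := mul_meas_ge_le_lintegral₀ (hg.pow_const p).aemeasurable _

section Capacity

variable {X : Type*} [MetricSpace X] [MeasurableSpace X] {μ : Measure X} {β p : ℝ}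

lemma isHajlaszGradient_indicator {κ : ℝ} {u : X → ℝ} {Ω : Set X} (hΩ : MeasurableSet Ω)
    (hu : IsHolderWith κ β u) (hu0 : ∀ x ∉ Ω, u x = 0) :
    IsHajlaszGradient μ β u (Ω.indicator fun _ => ENNReal.ofReal κ) := by
  refine ⟨measurable_const.indicator hΩ, ∅, measure_empty, fun y _ z _ => ?_⟩
  have bound : ∀ w ∈ Ω, ENNReal.ofReal |u y - u z| ≤
      ENNReal.ofReal (dist y z ^ β) * Ω.indicator (fun _ => ENNReal.ofReal κ) w := by
    intro w hw
    rw [indicator_of_mem hw, ← ENNReal.ofReal_mul (by positivity), mul_comm]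
    exact ENNReal.ofReal_le_ofReal (hu y z)
  by_cases hy : y ∈ Ω
  · exact (bound y hy).trans (by gcongr; exact le_self_add)
  by_cases hz : z ∈ Ω
  · exact (bound z hz).trans (by gcongr; exact le_add_self)
  simp [hu0 y hy, hu0 z hz]

lemma hajlaszCapacity_le_of_isHolderWith {κ : ℝ} {u : X → ℝ} {F Ω : Set X}
    (hΩ : MeasurableSet Ω) (hp : 0 < p) (hu : IsHolderWith κ β u) (hF : ∀ x ∈ F, 1 ≤ u x)
    (hu0 : ∀ x ∉ Ω, u x = 0) :
    hajlaszCapacity μ β p F Ω ≤ ENNReal.ofReal κ ^ p * μ Ω := by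
  have hint : ∫⁻ x, Ω.indicator (fun _ => ENNReal.ofReal κ) x ^ p ∂μ =
      ENNReal.ofReal κ ^ p * μ Ω := by
    rw [← lintegral_indicator_const hΩ]
    exact lintegral_congr fun x => (congr_fun (indicator_comp_of_zero
      (g := fun t : ℝ≥0∞ => t ^ p) (ENNReal.zero_rpow_of_pos hp)) x).symm
  exact sInf_le ⟨u, ⟨κ, hu⟩, hF, hu0, _, isHajlaszGradient_indicator hΩ hu hu0, hint.symm⟩

lemma rpow_mul_min_le_hajlaszCapacity {D : ℝ} {A B F Ω : Set X} (hβ : 0 ≤ β) (hp : 0 ≤ p)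
    (hD : 0 < D) (hAF : A ⊆ F) (hBΩ : Disjoint B Ω)
    (hAB : ∀ y ∈ A, ∀ z ∈ B, dist y z ≤ D) :
    ENNReal.ofReal (D ^ (-β) / 2) ^ p * min (μ A) (μ B) ≤ hajlaszCapacity μ β p F Ω := by
  refine le_sInf ?_
  rintro _ ⟨v, -, hvF, hvΩ, g, ⟨hg, N, hN, hgrad⟩, rfl⟩
  set t := ENNReal.ofReal (D ^ (-β) / 2)
  have hgood : (∀ y ∈ A, y ∉ N → t ≤ g y) ∨ (∀ z ∈ B, z ∉ N → t ≤ g z) := by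
    by_contra! h
    obtain ⟨⟨y, hyA, hyN, hy⟩, ⟨z, hzB, hzN, hz⟩⟩ := h
    have hjump : 1 ≤ |v y - v z| := by
      rw [hvΩ z (hBΩ.notMem_of_mem_left hzB), sub_zero]
      exact (hvF y (hAF hyA)).trans (le_abs_self _)
    have hlt : g y + g z < ENNReal.ofReal (D ^ (-β)) :=
      calc g y + g z < t + t := ENNReal.add_lt_add hy hz
        _ = ENNReal.ofReal (D ^ (-β)) := by
          rw [← ENNReal.ofReal_add (by positivity) (by positivity), add_halves]
    exact hlt.not_ge (ofReal_rpow_neg_le_add hD hβ hgrad hyN hzN hjump (hAB y hyA z hzB))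
  rcases hgood with hA | hB
  · exact (mul_le_mul_right (min_le_left _ _) _).trans (mul_measure_le_lintegral_rpow hg hN hp hA)
  · exact (mul_le_mul_right (min_le_right _ _) _).trans (mul_measure_le_lintegral_rpow hg hN hp hB)

end Capacity

lemma exists_dist_eq_of_ofReal_two_mul_lt_ediam {X : Type*} [MetricSpace X] [ConnectedSpace X]
    (x : X) {s : ℝ} (hs : 0 ≤ s) (h : ENNReal.ofReal (2 * s) < ediam (univ : Set X)) :
    ∃ z, dist x z = s := by
  obtain ⟨w, hw⟩ : ∃ w, s ≤ dist x w := by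
    by_contra! hlt
    refine h.not_ge (ediam_le fun a _ b _ => ?_)
    calc edist a b ≤ edist x a + edist x b := edist_triangle_left a b x
      _ = ENNReal.ofReal (dist x a + dist x b) := by
        rw [edist_dist, edist_dist, ENNReal.ofReal_add dist_nonneg dist_nonneg]
      _ ≤ ENNReal.ofReal (2 * s) := ENNReal.ofReal_le_ofReal (by linarith [hlt a, hlt b])
  exact intermediate_value_univ x w (continuous_const.dist continuous_id)
    ⟨by simpa using hs, hw⟩

lemma measure_ball_le_sq_mul {X : Type*} [MetricSpace X] [MeasurableSpace X] {μ : Measure X}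
    {c : ℝ≥0}
    (hdbl : ∀ (x : X) (r : ℝ), 0 < r → μ (ball x (2 * r)) ≤ c * μ (ball x r))
    {x z : X} {r : ℝ} (hr : 0 < r) (hxz : dist x z ≤ 3 * r) :
    μ (ball x r) ≤ c ^ 2 * μ (ball z r) :=
  calc μ (ball x r) ≤ μ (ball z (2 * (2 * r))) :=
        measure_mono (ball_subset_ball' (by linarith))
    _ ≤ c * (c * μ (ball z r)) :=
        (hdbl z _ (by positivity)).trans (mul_le_mul_right (hdbl z r hr) _)
    _ = c ^ 2 * μ (ball z r) := by ring

lemma hajlaszCapacity_closure_ball_le {X : Type*} [MetricSpace X] [MeasurableSpace X]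
    [OpensMeasurableSpace X] {μ : Measure X} {c : ℝ≥0}
    (hdbl : ∀ (x : X) (r : ℝ), 0 < r → μ (ball x (2 * r)) ≤ c * μ (ball x r))
    {β p r : ℝ} (hr : 0 < r) (hp : 0 < p) (hβ : 0 ≤ β) (hβ1 : β ≤ 1) (x : X) :
    hajlaszCapacity μ β p (closure (ball x r)) (ball x (2 * r)) ≤
      c * ENNReal.ofReal (r ^ (-(β * p))) * μ (ball x r) := by
  have hκ : ENNReal.ofReal (r ^ (-β)) ^ p = ENNReal.ofReal (r ^ (-(β * p))) := by
    rw [ENNReal.ofReal_rpow_of_pos (by positivity), ← Real.rpow_mul hr.le, neg_mul]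
  calc hajlaszCapacity μ β p (closure (ball x r)) (ball x (2 * r))
      ≤ ENNReal.ofReal (r ^ (-β)) ^ p * μ (ball x (2 * r)) :=
        hajlaszCapacity_le_of_isHolderWith measurableSet_ball hp
          (isHolderWith_ballCutoff hr hβ hβ1 x) (fun _ => one_le_ballCutoff hr)
          (fun _ => ballCutoff_eq_zero hr)
    _ ≤ ENNReal.ofReal (r ^ (-(β * p))) * (c * μ (ball x r)) := by
        rw [hκ]; gcongr; exact hdbl x r hr
    _ = c * ENNReal.ofReal (r ^ (-(β * p))) * μ (ball x r) := by ring

lemma ofReal_rpow_neg_mul_le {r β p : ℝ} (hr : 0 < r) (hp : 0 ≤ p) (hβ1 : β ≤ 1) :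
    ENNReal.ofReal (r ^ (-(β * p))) ≤ 10 ^ p * ENNReal.ofReal ((5 * r) ^ (-β) / 2) ^ p := by
  have h5 : 1 ≤ (5 : ℝ) ^ (p - β * p) := Real.one_le_rpow (by norm_num) (by nlinarith)
  have key : r ^ (-(β * p)) ≤ 10 ^ p * ((5 * r) ^ (-β) / 2) ^ p :=
    calc r ^ (-(β * p)) ≤ (5 : ℝ) ^ (p - β * p) * r ^ (-(β * p)) :=
          le_mul_of_one_le_left (by positivity) h5
      _ = 10 ^ p * ((5 * r) ^ (-β) / 2) ^ p := by
        rw [Real.div_rpow (by positivity) (by norm_num), ← Real.rpow_mul (by positivity),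
          Real.mul_rpow (by norm_num) hr.le, show (10 : ℝ) = 5 * 2 by norm_num,
          Real.mul_rpow (by norm_num) (by norm_num), sub_eq_add_neg, Real.rpow_add (by norm_num),
          neg_mul]
        field_simp
  rw [ENNReal.ofReal_rpow_of_pos (by positivity), ← ENNReal.ofReal_ofNat 10,
    ENNReal.ofReal_rpow_of_pos (by norm_num), ← ENNReal.ofReal_mul (by positivity)]
  exact ENNReal.ofReal_le_ofReal key

lemma ofReal_rpow_mul_measure_ball_le_hajlaszCapacity {X : Type*} [MetricSpace X]
    [MeasurableSpace X] {μ : Measure X} {c : ℝ≥0}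
    (hdbl : ∀ (x : X) (r : ℝ), 0 < r → μ (ball x (2 * r)) ≤ c * μ (ball x r))
    {β p r : ℝ} (hr : 0 < r) (hp : 0 ≤ p) (hβ : 0 ≤ β) (hβ1 : β ≤ 1) {x z : X}
    (hxz : dist x z = 3 * r) :
    ENNReal.ofReal (r ^ (-(β * p))) * μ (ball x r) ≤
      10 ^ p * (1 + c) ^ 2 * hajlaszCapacity μ β p (closure (ball x r)) (ball x (2 * r)) := by
  have hcap := rpow_mul_min_le_hajlaszCapacity (μ := μ) (D := 5 * r) (A := ball x r)
    (B := ball z r) (Ω := ball x (2 * r)) hβ hp (by positivity) subset_closure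
    (ball_disjoint_ball (by rw [dist_comm]; linarith))
    fun y hy w hw => (dist_triangle4 y x z w).trans
      (by rw [mem_ball] at hy hw; linarith [dist_comm z w])
  have hμ : μ (ball x r) ≤ (1 + c) ^ 2 * min (μ (ball x r)) (μ (ball z r)) := by
    rw [mul_min]
    exact le_min (le_mul_of_one_le_left' (one_le_pow₀ le_self_add))
      ((measure_ball_le_sq_mul hdbl hr hxz.le).trans (by gcongr; exact le_add_self))
  calc ENNReal.ofReal (r ^ (-(β * p))) * μ (ball x r)
      ≤ 10 ^ p * ENNReal.ofReal ((5 * r) ^ (-β) / 2) ^ p *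
        ((1 + c) ^ 2 * min (μ (ball x r)) (μ (ball z r))) := by
        gcongr
        exact ofReal_rpow_neg_mul_le hr hp hβ1
    _ = 10 ^ p * (1 + c) ^ 2 *
        (ENNReal.ofReal ((5 * r) ^ (-β) / 2) ^ p * min (μ (ball x r)) (μ (ball z r))) := by
      ring
    _ ≤ _ := by gcongr

theorem stmt7_general {X : Type*} [MetricSpace X] [MeasurableSpace X] [BorelSpace X]
    [ConnectedSpace X]
    (μ : Measure X)
    (c : ℝ≥0)
    (hdbl : ∀ (x : X) (r : ℝ), 0 < r → μ (ball x (2 * r)) ≤ (c : ℝ≥0∞) * μ (ball x r))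
    (p β : ℝ) (hp : 1 ≤ p) (hβ : 0 < β) (hβ1 : β ≤ 1) :
    ∃ C : ℝ≥0, 0 < C ∧
      ∀ (x : X) (r : ℝ), 0 < r →
        ENNReal.ofReal (8 * r) < EMetric.diam (univ : Set X) →
        (C : ℝ≥0∞)⁻¹ * ENNReal.ofReal (r ^ (-(β * p))) * μ (ball x r) ≤
          hajlaszCapacity μ β p (closure (ball x r)) (ball x (2 * r)) ∧
        hajlaszCapacity μ β p (closure (ball x r)) (ball x (2 * r)) ≤
          (C : ℝ≥0∞) * ENNReal.ofReal (r ^ (-(β * p))) * μ (ball x r) := by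
  have hp0 : 0 < p := by linarith
  have hC : ((10 ^ p * (1 + c) ^ 2 : ℝ≥0) : ℝ≥0∞) = 10 ^ p * (1 + c) ^ 2 := by
    push_cast
    rw [ENNReal.coe_rpow_of_nonneg _ hp0.le, ENNReal.coe_ofNat]
  refine ⟨10 ^ p * (1 + c) ^ 2, by positivity, fun x r hr hdiam => ⟨?_, ?_⟩⟩
  · obtain ⟨z, hz⟩ := exists_dist_eq_of_ofReal_two_mul_lt_ediam x (s := 3 * r) (by positivity)
      ((ENNReal.ofReal_le_ofReal (by linarith)).trans_lt hdiam)
    rw [mul_assoc, ENNReal.inv_mul_le_iff (by positivity) ENNReal.coe_ne_top, hC]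
    exact ofReal_rpow_mul_measure_ball_le_hajlaszCapacity hdbl hr hp0.le hβ.le hβ1 hz
  · refine (hajlaszCapacity_closure_ball_le hdbl hr hp0 hβ.le hβ1 x).trans ?_
    rw [hC]
    gcongr
    calc (c : ℝ≥0∞) ≤ 1 + c := le_add_self
      _ ≤ (1 + c) ^ 2 := le_self_pow₀ le_self_add two_ne_zero
      _ ≤ 10 ^ p * (1 + c) ^ 2 := le_mul_of_one_le_left' (ENNReal.one_le_rpow (by norm_num) hp0)

theorem stmt7 {X : Type*} [MetricSpace X] [MeasurableSpace X] [BorelSpace X]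
    [Nontrivial X] [ConnectedSpace X]
    (μ : Measure X)
    (hpos : ∀ (x : X) (r : ℝ), 0 < r → 0 < μ (ball x r))
    (hfin : ∀ (x : X) (r : ℝ), μ (ball x r) < ∞)
    (c : ℝ≥0) (hc : 1 < c)
    (hdbl : ∀ (x : X) (r : ℝ), 0 < r → μ (ball x (2 * r)) ≤ (c : ℝ≥0∞) * μ (ball x r))
    (p β : ℝ) (hp : 1 ≤ p) (hβ : 0 < β) (hβ1 : β ≤ 1) :
    ∃ C : ℝ≥0, 0 < C ∧
      ∀ (x : X) (r : ℝ), 0 < r →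
        ENNReal.ofReal (8 * r) < EMetric.diam (univ : Set X) →
        (C : ℝ≥0∞)⁻¹ * ENNReal.ofReal (r ^ (-(β * p))) * μ (ball x r) ≤
          hajlaszCapacity μ β p (closure (ball x r)) (ball x (2 * r)) ∧
        hajlaszCapacity μ β p (closure (ball x r)) (ball x (2 * r)) ≤
          (C : ℝ≥0∞) * ENNReal.ofReal (r ^ (-(β * p))) * μ (ball x r) :=
  stmt7_general μ c hdbl p β hp hβ hβ1
end

section
/- Let 1 ≤ p < ∞, 0 < β ≤ 1, and assume μ satisfies the quantitative reverse doubling condition μ(B(x,r))/μ(B(x,R)) ≤ c_σ (r/R)^σ for all 0 < r < R ≤ 2 diam(X), with σ > βp. Let x ∈ X, 0 < r < (1/8) diam(X), and let f ∈ L^p(X) be nonnegative. If for some z in the closure of B(x,r) one has ∫_{X ∖ B(z,r/5)} f(y) d(z,y)^β / μ(B(z,d(z,y))) dμ(y) ≥ 1/2, then ‖f‖_{L^p(X)}^p ≥ C r^{−βp} μ(B(x,r)) with C = C(c_μ, c_σ, β, σ, p) > 0. -/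
open MeasureTheory Metric Set ENNReal NNReal

theorem lintegral_le_lintegral_rpow_mul_measure_univ {α : Type*} [MeasurableSpace α]
    (ν : Measure α) {p : ℝ} (hp : 1 ≤ p) {f : α → ℝ≥0∞} (hf : AEMeasurable f ν) :
    ∫⁻ a, f a ∂ν ≤ (∫⁻ a, f a ^ p ∂ν) ^ (1 / p) * ν univ ^ (1 - 1 / p) := by
  simpa [eLpNorm'_eq_lintegral_enorm] using
    eLpNorm'_le_eLpNorm'_mul_rpow_measure_univ one_pos hp hf.aestronglyMeasurable

theorem dyadic_annulus_factor_eq {a s : ℝ} (ha : 0 ≤ a) (hs : 0 < s) (β σ p : ℝ) (j : ℕ) :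
    (a * (s / (2 ^ j * s)) ^ σ) ^ (1 / p) * (2 * (2 ^ j * s)) ^ β =
      a ^ (1 / p) * 2 ^ β * s ^ β * (2 ^ (β - σ / p)) ^ j := by
  set t : ℝ := 2 ^ j with ht_def
  have ht : 0 < t := by positivity
  have hpow : t ^ (β - σ / p) = (2 ^ (β - σ / p)) ^ j := by
    rw [ht_def, ← Real.rpow_natCast, ← Real.rpow_natCast, ← Real.rpow_mul zero_le_two,
      ← Real.rpow_mul zero_le_two, mul_comm]
  have hinv : ((s / (t * s)) ^ σ) ^ (1 / p) = t ^ (-(σ / p)) := by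
    rw [div_mul_cancel_right₀ hs.ne', Real.inv_rpow ht.le, ← Real.rpow_neg ht.le,
      ← Real.rpow_mul ht.le]
    ring_nf
  rw [Real.mul_rpow ha (by positivity), hinv, ← mul_assoc, Real.mul_rpow (by positivity) hs.le,
    Real.mul_rpow zero_le_two ht.le, ← hpow, sub_eq_add_neg, Real.rpow_add ht]
  ring

section

variable {X : Type*} [MetricSpace X]

theorem compl_ball_subset_iUnion_dyadic_annulus (z : X) {s : ℝ} (hs : 0 < s) :
    (ball z s)ᶜ ⊆ ⋃ j : ℕ, ball z (2 ^ (j + 1) * s) \ ball z (2 ^ j * s) := by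
  intro y hy
  have hsy : s ≤ dist y z := by simpa using hy
  obtain ⟨j, hj, hj'⟩ := exists_nat_pow_near ((one_le_div hs).2 hsy) one_lt_two
  refine mem_iUnion.2 ⟨j, ?_, ?_⟩
  · rw [mem_ball, ← div_lt_iff₀ hs]; exact hj'
  · rw [mem_ball, not_lt, ← le_div_iff₀ hs]; exact hj

variable [MeasurableSpace X]

def DoublingAt (μ : Measure X) (c : ℝ≥0∞) (z : X) : Prop :=
  ∀ r : ℝ, 0 < r → μ (ball z (2 * r)) ≤ c * μ (ball z r)

def ReverseDoublingAt (μ : Measure X) (σ cσ : ℝ) (z : X) : Prop :=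
  ∀ r R : ℝ, 0 < r → r < R → ENNReal.ofReal R ≤ 2 * ediam (univ : Set X) →
    μ (ball z r) ≤ ENNReal.ofReal (cσ * (r / R) ^ σ) * μ (ball z R)

variable {μ : Measure X}

theorem rieszKernel_le_of_mem_annulus {β : ℝ} (hβ : 0 ≤ β) {z y : X} {ρ R : ℝ}
    (hy : y ∈ ball z R \ ball z ρ) :
    rieszKernel μ β z y ≤ ENNReal.ofReal (R ^ β) / μ (ball z ρ) := by
  rw [mem_sdiff, mem_ball', mem_ball', not_lt] at hy
  exact ENNReal.div_le_div (ENNReal.ofReal_le_ofReal (by gcongr; exact hy.1.le))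
    (measure_mono (ball_subset_ball hy.2))

theorem DoublingAt.measure_ball_two_pow_mul_le {c : ℝ≥0∞} {z : X}
    (hdbl : DoublingAt μ c z) {ρ : ℝ} (hρ : 0 < ρ) :
    ∀ n : ℕ, μ (ball z (2 ^ n * ρ)) ≤ c ^ n * μ (ball z ρ)
  | 0 => by simp
  | n + 1 => calc
      μ (ball z (2 ^ (n + 1) * ρ)) = μ (ball z (2 * (2 ^ n * ρ))) := by ring_nf
      _ ≤ c * μ (ball z (2 ^ n * ρ)) := hdbl _ (by positivity)
      _ ≤ c * (c ^ n * μ (ball z ρ)) := by gcongr; exact hdbl.measure_ball_two_pow_mul_le hρ n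
      _ = c ^ (n + 1) * μ (ball z ρ) := by ring

theorem ReverseDoublingAt.measure_ball_le {σ cσ : ℝ} {z : X}
    (hrd : ReverseDoublingAt μ σ cσ z) {r R : ℝ} (hr : 0 < r) (hrR : r ≤ R)
    (hR : ENNReal.ofReal R ≤ 2 * ediam (univ : Set X)) :
    μ (ball z r) ≤ ENNReal.ofReal (max cσ 1 * (r / R) ^ σ) * μ (ball z R) := by
  rcases hrR.eq_or_lt with rfl | hlt
  · rw [div_self hr.ne', Real.one_rpow, mul_one]
    exact le_mul_of_one_le_left' (ENNReal.one_le_ofReal.2 (le_max_right _ _))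
  · refine (hrd r R hr hlt hR).trans ?_
    gcongr
    · exact Real.rpow_nonneg (div_nonneg hr.le (hr.trans hlt).le) _
    · exact le_max_left cσ 1

theorem measure_ball_rpow_mul_setLIntegral_annulus_rieszKernel_le {p β : ℝ} (hp : 1 ≤ p)
    (hβ : 0 ≤ β) {c : ℝ≥0∞} (hc : 1 ≤ c) {z : X} {R : ℝ}
    (hdbl : μ (ball z (2 * R)) ≤ c * μ (ball z R)) (h0 : μ (ball z R) ≠ 0)
    (hfin : μ (ball z R) ≠ ∞) {f : X → ℝ≥0∞} (hf : Measurable f) :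
    μ (ball z R) ^ (1 / p) * ∫⁻ y in ball z (2 * R) \ ball z R, f y * rieszKernel μ β z y ∂μ ≤
      c * ENNReal.ofReal ((2 * R) ^ β) * (∫⁻ y, f y ^ p ∂μ) ^ (1 / p) := by
  set m := μ (ball z R)
  set A := ball z (2 * R) \ ball z R
  have hp' : 0 ≤ 1 - 1 / p := sub_nonneg.2 ((div_le_one (by linarith)).2 hp)
  have hkernel : ∫⁻ y in A, f y * rieszKernel μ β z y ∂μ ≤
      (∫⁻ y in A, f y ∂μ) * (ENNReal.ofReal ((2 * R) ^ β) / m) := by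
    rw [← lintegral_mul_const _ hf]
    exact setLIntegral_mono (hf.mul_const _) fun y hy => by
      gcongr; exact rieszKernel_le_of_mem_annulus hβ hy
  have hholder : ∫⁻ y in A, f y ∂μ ≤ (∫⁻ y, f y ^ p ∂μ) ^ (1 / p) * (c * m ^ (1 - 1 / p)) :=
    calc ∫⁻ y in A, f y ∂μ
        ≤ (∫⁻ y in A, f y ^ p ∂μ) ^ (1 / p) * μ A ^ (1 - 1 / p) := by
          simpa using lintegral_le_lintegral_rpow_mul_measure_univ (μ.restrict A) hp
            hf.aemeasurable
      _ ≤ (∫⁻ y, f y ^ p ∂μ) ^ (1 / p) * (c * m) ^ (1 - 1 / p) := by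
          gcongr
          · exact Measure.restrict_le_self
          · exact (measure_mono sdiff_subset).trans hdbl
      _ ≤ (∫⁻ y, f y ^ p ∂μ) ^ (1 / p) * (c * m ^ (1 - 1 / p)) := by
          rw [ENNReal.mul_rpow_of_nonneg _ _ hp']
          gcongr
          calc c ^ (1 - 1 / p) ≤ c ^ (1 : ℝ) := by
                gcongr; linarith [one_div_nonneg.2 (by linarith : 0 ≤ p)]
            _ = c := ENNReal.rpow_one c
  have hm : m ^ (1 / p) * m ^ (1 - 1 / p) / m = 1 := by
    rw [← ENNReal.rpow_add_of_nonneg _ _ (by positivity) hp', add_sub_cancel, ENNReal.rpow_one,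
      ENNReal.div_self h0 hfin]
  calc m ^ (1 / p) * ∫⁻ y in A, f y * rieszKernel μ β z y ∂μ
      ≤ m ^ (1 / p) * ((∫⁻ y, f y ^ p ∂μ) ^ (1 / p) * (c * m ^ (1 - 1 / p)) *
          (ENNReal.ofReal ((2 * R) ^ β) / m)) := by
        gcongr
        exact hkernel.trans (by gcongr)
    _ = c * ENNReal.ofReal ((2 * R) ^ β) * (∫⁻ y, f y ^ p ∂μ) ^ (1 / p) *
          (m ^ (1 / p) * m ^ (1 - 1 / p) / m) := by
        simp only [div_eq_mul_inv]; ring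
    _ = c * ENNReal.ofReal ((2 * R) ^ β) * (∫⁻ y, f y ^ p ∂μ) ^ (1 / p) := by rw [hm, mul_one]

theorem measure_ball_rpow_mul_setLIntegral_dyadic_annulus_rieszKernel_le {p β σ cσ : ℝ}
    (hp : 1 ≤ p) (hβ : 0 ≤ β) {c : ℝ≥0∞} (hc : 1 ≤ c) {z : X}
    (hpos : ∀ r : ℝ, 0 < r → 0 < μ (ball z r)) (hfin : ∀ r : ℝ, μ (ball z r) < ∞)
    (hdbl : DoublingAt μ c z) (hrd : ReverseDoublingAt μ σ cσ z)
    {s : ℝ} (hs : 0 < s) {f : X → ℝ≥0∞} (hf : Measurable f) (j : ℕ) :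
    μ (ball z s) ^ (1 / p) *
        ∫⁻ y in ball z (2 ^ (j + 1) * s) \ ball z (2 ^ j * s), f y * rieszKernel μ β z y ∂μ ≤
      c * ENNReal.ofReal (max cσ 1 ^ (1 / p) * 2 ^ β) * ENNReal.ofReal (s ^ β) *
        (∫⁻ y, f y ^ p ∂μ) ^ (1 / p) * ENNReal.ofReal (2 ^ (β - σ / p)) ^ j := by
  set R := 2 ^ j * s
  rw [pow_succ', mul_assoc]
  rcases (ball z (2 * R) \ ball z R).eq_empty_or_nonempty with hA | ⟨y, hy⟩
  · rw [hA, Measure.restrict_empty, lintegral_zero_measure, mul_zero]; exact zero_le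
  have hR : 0 < R := by positivity
  have hRdiam : ENNReal.ofReal R ≤ 2 * ediam (univ : Set X) :=
    calc ENNReal.ofReal R ≤ edist y z := by
          rw [edist_dist]; exact ENNReal.ofReal_le_ofReal (by simpa using hy.2)
      _ ≤ ediam (univ : Set X) := edist_le_ediam_of_mem trivial trivial
      _ ≤ 2 * ediam (univ : Set X) := le_mul_of_one_le_left' one_le_two
  have hrev := hrd.measure_ball_le hs
    (le_mul_of_one_le_left hs.le (one_le_pow₀ one_le_two)) hRdiam
  have hann := measure_ball_rpow_mul_setLIntegral_annulus_rieszKernel_le hp hβ hc (hdbl R hR)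
    (hpos R hR).ne' (hfin R).ne hf
  have hp' : 0 ≤ 1 / p := by positivity
  calc μ (ball z s) ^ (1 / p) * ∫⁻ y in ball z (2 * R) \ ball z R, f y * rieszKernel μ β z y ∂μ
      ≤ (ENNReal.ofReal (max cσ 1 * (s / R) ^ σ) * μ (ball z R)) ^ (1 / p) *
          ∫⁻ y in ball z (2 * R) \ ball z R, f y * rieszKernel μ β z y ∂μ := by gcongr
    _ ≤ ENNReal.ofReal (max cσ 1 * (s / R) ^ σ) ^ (1 / p) *
          (c * ENNReal.ofReal ((2 * R) ^ β) * (∫⁻ y, f y ^ p ∂μ) ^ (1 / p)) := by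
        rw [ENNReal.mul_rpow_of_nonneg _ _ hp', mul_assoc]
        gcongr
    _ = c * ENNReal.ofReal ((max cσ 1 * (s / R) ^ σ) ^ (1 / p) * (2 * R) ^ β) *
          (∫⁻ y, f y ^ p ∂μ) ^ (1 / p) := by
        rw [ENNReal.ofReal_rpow_of_nonneg (by positivity) hp', ENNReal.ofReal_mul (by positivity)]
        ring
    _ = _ := by
        rw [dyadic_annulus_factor_eq (by positivity) hs, ENNReal.ofReal_mul (by positivity),
          ENNReal.ofReal_mul (by positivity), ENNReal.ofReal_pow (by positivity)]
        ring

noncomputable def rieszTailConst (c : ℝ≥0∞) (p β σ cσ : ℝ) : ℝ≥0∞ :=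
  c * ENNReal.ofReal (max cσ 1 ^ (1 / p) * 2 ^ β) * (1 - ENNReal.ofReal (2 ^ (β - σ / p)))⁻¹

theorem rieszTailConst_ne_zero {c : ℝ≥0∞} (hc : c ≠ 0) (p β σ cσ : ℝ) :
    rieszTailConst c p β σ cσ ≠ 0 := by
  have : 0 < max cσ 1 := lt_max_of_lt_right one_pos
  unfold rieszTailConst
  exact mul_ne_zero (mul_ne_zero hc (ENNReal.ofReal_pos.2 (by positivity)).ne')
    (ENNReal.inv_ne_zero.2 (ne_top_of_le_ne_top one_ne_top tsub_le_self))

theorem rieszTailConst_ne_top {c : ℝ≥0∞} (hc : c ≠ ∞) {p β σ : ℝ} (hp : 0 < p) (hσ : β * p < σ)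
    (cσ : ℝ) : rieszTailConst c p β σ cσ ≠ ∞ := by
  have hexp : β - σ / p < 0 := sub_neg.2 ((lt_div_iff₀ hp).2 hσ)
  have hratio : ENNReal.ofReal (2 ^ (β - σ / p)) < 1 :=
    ENNReal.ofReal_lt_one.2 (Real.rpow_lt_one_of_one_lt_of_neg one_lt_two hexp)
  exact ENNReal.mul_ne_top (ENNReal.mul_ne_top hc ENNReal.ofReal_ne_top)
    (ENNReal.inv_ne_top.2 (tsub_pos_of_lt hratio).ne')

theorem measure_ball_rpow_mul_setLIntegral_compl_ball_rieszKernel_le {p β σ cσ : ℝ}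
    (hp : 1 ≤ p) (hβ : 0 ≤ β) {c : ℝ≥0∞} (hc : 1 ≤ c) {z : X}
    (hpos : ∀ r : ℝ, 0 < r → 0 < μ (ball z r)) (hfin : ∀ r : ℝ, μ (ball z r) < ∞)
    (hdbl : DoublingAt μ c z) (hrd : ReverseDoublingAt μ σ cσ z)
    {s : ℝ} (hs : 0 < s) {f : X → ℝ≥0∞} (hf : Measurable f) :
    μ (ball z s) ^ (1 / p) * ∫⁻ y in (ball z s)ᶜ, f y * rieszKernel μ β z y ∂μ ≤
      rieszTailConst c p β σ cσ * ENNReal.ofReal (s ^ β) * (∫⁻ y, f y ^ p ∂μ) ^ (1 / p) := by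
  set B := c * ENNReal.ofReal (max cσ 1 ^ (1 / p) * 2 ^ β) * ENNReal.ofReal (s ^ β) *
    (∫⁻ y, f y ^ p ∂μ) ^ (1 / p)
  calc μ (ball z s) ^ (1 / p) * ∫⁻ y in (ball z s)ᶜ, f y * rieszKernel μ β z y ∂μ
      ≤ μ (ball z s) ^ (1 / p) * ∑' j : ℕ,
          ∫⁻ y in ball z (2 ^ (j + 1) * s) \ ball z (2 ^ j * s), f y * rieszKernel μ β z y ∂μ := by
        gcongr
        exact (lintegral_mono_set (compl_ball_subset_iUnion_dyadic_annulus z hs)).trans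
          (lintegral_iUnion_le _ _)
    _ ≤ ∑' j : ℕ, B * ENNReal.ofReal (2 ^ (β - σ / p)) ^ j := by
        rw [← ENNReal.tsum_mul_left]
        exact ENNReal.tsum_le_tsum fun j =>
          measure_ball_rpow_mul_setLIntegral_dyadic_annulus_rieszKernel_le hp hβ hc hpos hfin
            hdbl hrd hs hf j
    _ = rieszTailConst c p β σ cσ * ENNReal.ofReal (s ^ β) * (∫⁻ y, f y ^ p ∂μ) ^ (1 / p) := by
        rw [ENNReal.tsum_mul_left, ENNReal.tsum_geometric, rieszTailConst]
        ring

theorem measure_ball_le_of_half_le_setLIntegral_compl_ball_rieszKernel {p β σ cσ : ℝ}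
    (hp : 1 ≤ p) (hβ : 0 ≤ β) {c : ℝ≥0∞} (hc : 1 ≤ c) {z : X}
    (hpos : ∀ r : ℝ, 0 < r → 0 < μ (ball z r)) (hfin : ∀ r : ℝ, μ (ball z r) < ∞)
    (hdbl : DoublingAt μ c z) (hrd : ReverseDoublingAt μ σ cσ z)
    {s : ℝ} (hs : 0 < s) {f : X → ℝ≥0∞} (hf : Measurable f)
    (hhalf : 1 / 2 ≤ ∫⁻ y in (ball z s)ᶜ, f y * rieszKernel μ β z y ∂μ) :
    μ (ball z s) ≤
      (2 * rieszTailConst c p β σ cσ) ^ p * ENNReal.ofReal (s ^ (β * p)) * ∫⁻ y, f y ^ p ∂μ := by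
  have hp0 : 0 < p := by linarith
  have hroot : μ (ball z s) ^ (1 / p) ≤
      2 * rieszTailConst c p β σ cσ * ENNReal.ofReal (s ^ β) * (∫⁻ y, f y ^ p ∂μ) ^ (1 / p) :=
    calc μ (ball z s) ^ (1 / p) = 2 * (μ (ball z s) ^ (1 / p) * (1 / 2)) := by
          rw [mul_comm 2, mul_assoc, ENNReal.div_mul_cancel two_ne_zero ofNat_ne_top, mul_one]
      _ ≤ 2 * (μ (ball z s) ^ (1 / p) * ∫⁻ y in (ball z s)ᶜ, f y * rieszKernel μ β z y ∂μ) := by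
          gcongr
      _ ≤ 2 * (rieszTailConst c p β σ cσ * ENNReal.ofReal (s ^ β) *
            (∫⁻ y, f y ^ p ∂μ) ^ (1 / p)) := by
          gcongr 2 * ?_
          exact measure_ball_rpow_mul_setLIntegral_compl_ball_rieszKernel_le hp hβ hc hpos hfin
            hdbl hrd hs hf
      _ = _ := by ring
  have hinv : ∀ a : ℝ≥0∞, (a ^ (1 / p)) ^ p = a := fun a => by
    rw [← ENNReal.rpow_mul, one_div_mul_cancel hp0.ne', ENNReal.rpow_one]
  calc μ (ball z s) = (μ (ball z s) ^ (1 / p)) ^ p := (hinv _).symm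
    _ ≤ (2 * rieszTailConst c p β σ cσ * ENNReal.ofReal (s ^ β) *
          (∫⁻ y, f y ^ p ∂μ) ^ (1 / p)) ^ p := by gcongr
    _ = _ := by
        rw [ENNReal.mul_rpow_of_nonneg _ _ hp0.le, ENNReal.mul_rpow_of_nonneg _ _ hp0.le, hinv,
          ENNReal.ofReal_rpow_of_nonneg (by positivity) hp0.le, ← Real.rpow_mul hs.le]

theorem measure_ball_le_of_half_le_setLIntegral_compl_ball_div_five {p β σ cσ : ℝ}
    (hp : 1 ≤ p) (hβ : 0 ≤ β) {c : ℝ≥0∞} (hc : 1 ≤ c) {x z : X}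
    (hpos : ∀ r : ℝ, 0 < r → 0 < μ (ball z r)) (hfin : ∀ r : ℝ, μ (ball z r) < ∞)
    (hdbl : DoublingAt μ c z) (hrd : ReverseDoublingAt μ σ cσ z)
    {r : ℝ} (hr : 0 < r) (hz : z ∈ closure (ball x r)) {f : X → ℝ≥0∞} (hf : Measurable f)
    (hhalf : 1 / 2 ≤ ∫⁻ y in (ball z (r / 5))ᶜ, f y * rieszKernel μ β z y ∂μ) :
    μ (ball x r) ≤ c ^ 4 * (2 * rieszTailConst c p β σ cσ) ^ p * ENNReal.ofReal (r ^ (β * p)) *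
      ∫⁻ y, f y ^ p ∂μ := by
  have hsub : ball x r ⊆ ball z (2 ^ 4 * (r / 5)) := fun y hy => by
    have hzx : dist z x ≤ r := mem_closedBall.1 (closure_ball_subset_closedBall hz)
    rw [mem_ball] at hy ⊢
    linarith [dist_triangle y x z, dist_comm x z]
  calc μ (ball x r) ≤ c ^ 4 * μ (ball z (r / 5)) :=
        (measure_mono hsub).trans (hdbl.measure_ball_two_pow_mul_le (by positivity) 4)
    _ ≤ c ^ 4 * ((2 * rieszTailConst c p β σ cσ) ^ p * ENNReal.ofReal ((r / 5) ^ (β * p)) *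
          ∫⁻ y, f y ^ p ∂μ) := by
        gcongr
        exact measure_ball_le_of_half_le_setLIntegral_compl_ball_rieszKernel hp hβ hc hpos hfin
          hdbl hrd (by positivity) hf hhalf
    _ ≤ c ^ 4 * ((2 * rieszTailConst c p β σ cσ) ^ p * ENNReal.ofReal (r ^ (β * p)) *
          ∫⁻ y, f y ^ p ∂μ) := by
        gcongr
        linarith
    _ = _ := by ring

end

theorem ENNReal.inv_mul_ofReal_rpow_neg_mul_le {D a b : ℝ≥0∞} (hD0 : D ≠ 0) (hDtop : D ≠ ∞)
    {r : ℝ} (hr : 0 < r) (q : ℝ) (h : a ≤ D * ENNReal.ofReal (r ^ q) * b) :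
    D⁻¹ * ENNReal.ofReal (r ^ (-q)) * a ≤ b :=
  calc D⁻¹ * ENNReal.ofReal (r ^ (-q)) * a
      ≤ D⁻¹ * ENNReal.ofReal (r ^ (-q)) * (D * ENNReal.ofReal (r ^ q) * b) := by gcongr
    _ = D⁻¹ * D * ENNReal.ofReal (r ^ (-q) * r ^ q) * b := by
        rw [ENNReal.ofReal_mul (by positivity)]
        ring
    _ = b := by
        rw [ENNReal.inv_mul_cancel hD0 hDtop, ← Real.rpow_add hr, neg_add_cancel, Real.rpow_zero,
          ENNReal.ofReal_one, one_mul, one_mul]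

theorem stmt9_general {X : Type*} [MetricSpace X] [MeasurableSpace X]
    (μ : Measure X)
    (hpos : ∀ (x : X) (r : ℝ), 0 < r → 0 < μ (ball x r))
    (hfin : ∀ (x : X) (r : ℝ), μ (ball x r) < ∞)
    (c : ℝ≥0) (hc : 1 < c)
    (hdbl : ∀ (x : X) (r : ℝ), 0 < r → μ (ball x (2 * r)) ≤ (c : ℝ≥0∞) * μ (ball x r))
    (p β σ cσ : ℝ) (hp : 1 ≤ p) (hβ : 0 < β)
    (hσ : β * p < σ)
    (hrd : ∀ (x : X) (r R : ℝ), 0 < r → r < R →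
      ENNReal.ofReal R ≤ 2 * EMetric.diam (univ : Set X) →
      μ (ball x r) ≤ ENNReal.ofReal (cσ * (r / R) ^ σ) * μ (ball x R)) :
    ∃ C : ℝ≥0, 0 < C ∧
      ∀ (x z : X) (r : ℝ) (f : X → ℝ≥0∞), Measurable f →
        (∫⁻ y, f y ^ p ∂μ) ≠ ∞ →
        0 < r → ENNReal.ofReal (8 * r) < EMetric.diam (univ : Set X) →
        z ∈ closure (ball x r) →
        (1 / 2 : ℝ≥0∞) ≤ ∫⁻ y in (ball z (r / 5))ᶜ, f y * rieszKernel μ β z y ∂μ →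
        (C : ℝ≥0∞) * ENNReal.ofReal (r ^ (-(β * p))) * μ (ball x r) ≤
          ∫⁻ y, f y ^ p ∂μ := by
  have hp0 : 0 < p := by linarith
  have hc1 : (1 : ℝ≥0∞) ≤ c := by exact_mod_cast hc.le
  have hK0 : 2 * rieszTailConst c p β σ cσ ≠ 0 :=
    mul_ne_zero two_ne_zero (rieszTailConst_ne_zero (zero_lt_one.trans_le hc1).ne' p β σ cσ)
  have hKtop : 2 * rieszTailConst c p β σ cσ ≠ ∞ :=
    ENNReal.mul_ne_top ofNat_ne_top (rieszTailConst_ne_top coe_ne_top hp0 hσ cσ)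
  set D : ℝ≥0∞ := (c : ℝ≥0∞) ^ 4 * (2 * rieszTailConst c p β σ cσ) ^ p
  have hD0 : D ≠ 0 := mul_ne_zero (pow_ne_zero _ (zero_lt_one.trans_le hc1).ne')
    (ENNReal.rpow_pos (pos_iff_ne_zero.2 hK0) hKtop).ne'
  have hDtop : D ≠ ∞ :=
    ENNReal.mul_ne_top (pow_ne_top coe_ne_top) (ENNReal.rpow_ne_top_of_nonneg hp0.le hKtop)
  refine ⟨D⁻¹.toNNReal, ENNReal.toNNReal_pos (ENNReal.inv_ne_zero.2 hDtop)
    (ENNReal.inv_ne_top.2 hD0), fun x z r f hf _ hr _ hz hhalf => ?_⟩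
  rw [coe_toNNReal (ENNReal.inv_ne_top.2 hD0)]
  exact ENNReal.inv_mul_ofReal_rpow_neg_mul_le hD0 hDtop hr (β * p) <|
    measure_ball_le_of_half_le_setLIntegral_compl_ball_div_five hp hβ.le hc1 (hpos z) (hfin z)
      (hdbl z) (hrd z) hr hz hf hhalf

theorem stmt9 {X : Type*} [MetricSpace X] [MeasurableSpace X] [BorelSpace X]
    (μ : Measure X)
    (hpos : ∀ (x : X) (r : ℝ), 0 < r → 0 < μ (ball x r))
    (hfin : ∀ (x : X) (r : ℝ), μ (ball x r) < ∞)
    (c : ℝ≥0) (hc : 1 < c)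
    (hdbl : ∀ (x : X) (r : ℝ), 0 < r → μ (ball x (2 * r)) ≤ (c : ℝ≥0∞) * μ (ball x r))
    (p β σ cσ : ℝ) (hp : 1 ≤ p) (hβ : 0 < β) (hβ1 : β ≤ 1)
    (hσ : β * p < σ) (hcσ : 0 < cσ)
    (hrd : ∀ (x : X) (r R : ℝ), 0 < r → r < R →
      ENNReal.ofReal R ≤ 2 * EMetric.diam (univ : Set X) →
      μ (ball x r) ≤ ENNReal.ofReal (cσ * (r / R) ^ σ) * μ (ball x R)) :
    ∃ C : ℝ≥0, 0 < C ∧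
      ∀ (x z : X) (r : ℝ) (f : X → ℝ≥0∞), Measurable f →
        (∫⁻ y, f y ^ p ∂μ) ≠ ∞ →
        0 < r → ENNReal.ofReal (8 * r) < EMetric.diam (univ : Set X) →
        z ∈ closure (ball x r) →
        (1 / 2 : ℝ≥0∞) ≤ ∫⁻ y in (ball z (r / 5))ᶜ, f y * rieszKernel μ β z y ∂μ →
        (C : ℝ≥0∞) * ENNReal.ofReal (r ^ (-(β * p))) * μ (ball x r) ≤
          ∫⁻ y, f y ^ p ∂μ :=
  stmt9_general μ hpos hfin c hc hdbl p β σ cσ hp hβ hσ hrd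
end

section
/- Assume X is connected, let 1 ≤ p < ∞ and 0 < β ≤ 1, let E ⊂ X be closed, x ∈ E, and 0 < r < (1/8) diam(X). Then cap_{β,p}(E ∩ closure of B(x,r), B(x,2r)) ≥ C(c_μ,p) · R_{β,p}(E ∩ closure of B(x,r)), where R_{β,p} is the Riesz (β,p)-capacity. -/
open MeasureTheory Metric Set ENNReal NNReal

/-- The Riesz `(β,p)`-capacity of `F`. -/
noncomputable def rieszCapacity {X : Type*} [MetricSpace X] [MeasurableSpace X]
    (μ : Measure X) (β p : ℝ) (F : Set X) : ℝ≥0∞ :=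
  sInf { t | ∃ f : X → ℝ≥0∞, Measurable f ∧
    (∀ x ∈ F, 1 ≤ rieszPotential μ β f x) ∧ t = ∫⁻ x, f x ^ p ∂μ }

/-
Let `u` be admissible for the Hajłasz capacity with gradient `g`, and `y ∈ E ∩ B̄(x, r)`. Put
`ρᵢ = 4r / 2ⁱ`. Connectedness and `diam X > 8r` give balls `Bᵢ` of radius `ρᵢ / 8` inside the
disjoint annuli `{3ρᵢ/4 < d(y, ·) < ρᵢ}`; `B₀` lies outside `B(x, 2r)`, where `u = 0`. Pick
`wᵢ ∈ Bᵢ` off the exceptional set of `g` with `g(wᵢ) ≤ ⨍_{Bᵢ} g`. Telescoping the Hajłasz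
inequality along `w₀, …, wₙ` and letting `wₙ → y` (`u` is Hölder) gives
`|u(y)| ≤ 6 ∑ᵢ (3ρᵢ/4)^β g(wᵢ)`, and doubling bounds `(3ρᵢ/4)^β ⨍_{Bᵢ} g` by
`c⁴ ∫_{Bᵢ} g(w) d(y,w)^β / μ(B(y, d(y,w))) dμ(w)`. Summing over the disjoint `Bᵢ`,
`1 ≤ u(y) ≤ 6c⁴ I_β g(y)`, so `6c⁴ g` is admissible for the Riesz capacity.
-/

open Filter Topology Function

theorem exists_mem_notMem_le_setLAverage {α : Type*} [MeasurableSpace α] {μ : Measure α}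
    {N s : Set α} {f : α → ℝ≥0∞} (hN : μ N = 0) (hμ : μ s ≠ 0) (hμ₁ : μ s ≠ ∞)
    (hf : AEMeasurable f (μ.restrict s)) : ∃ x ∈ s, x ∉ N ∧ f x ≤ ⨍⁻ a in s, f a ∂μ := by
  have h := measure_le_setLAverage_pos hμ hμ₁ hf
  rw [← measure_sdiff_null hN] at h
  obtain ⟨x, ⟨hxs, hx⟩, hxN⟩ := nonempty_of_measure_ne_zero h.ne'
  exact ⟨x, hxs, hxN, hx⟩

theorem tsum_setLIntegral_le_lintegral {α : Type*} [MeasurableSpace α] {μ : Measure α}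
    {s : ℕ → Set α} (hs : ∀ i, MeasurableSet (s i)) (hd : Pairwise (Disjoint on s))
    (f : α → ℝ≥0∞) : ∑' i, ∫⁻ x in s i, f x ∂μ ≤ ∫⁻ x, f x ∂μ := by
  rw [← lintegral_iUnion hs hd]
  exact setLIntegral_le_lintegral _ _

theorem ENNReal.ofReal_rpow_le_mul_ofReal_rpow {d k s β : ℝ} (hd : 0 ≤ d) (hk : 1 ≤ k)
    (hβ : 0 ≤ β) (hβ1 : β ≤ 1) (h : d ≤ k * s) :
    ENNReal.ofReal (d ^ β) ≤ ENNReal.ofReal k * ENNReal.ofReal (s ^ β) := by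
  have hs : 0 ≤ s := nonneg_of_mul_nonneg_right (hd.trans h) (by linarith)
  rw [← ENNReal.ofReal_mul (by linarith)]
  refine ENNReal.ofReal_le_ofReal ?_
  calc d ^ β ≤ (k * s) ^ β := Real.rpow_le_rpow hd h hβ
    _ = k ^ β * s ^ β := Real.mul_rpow (by linarith) hs
    _ ≤ k * s ^ β := by
      gcongr
      exact Real.rpow_le_self_of_one_le hk hβ1

theorem ENNReal.ofReal_abs_sub_le_sum_range (a : ℕ → ℝ) (n : ℕ) :
    ENNReal.ofReal |a n - a 0| ≤ ∑ i ∈ Finset.range n, ENNReal.ofReal |a (i + 1) - a i| := by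
  induction n with
  | zero => simp
  | succ n ih =>
    have h := abs_sub_le (a (n + 1)) (a n) (a 0)
    calc ENNReal.ofReal |a (n + 1) - a 0|
        ≤ ENNReal.ofReal (|a n - a 0| + |a (n + 1) - a n|) :=
          ENNReal.ofReal_le_ofReal (by linarith)
      _ ≤ ENNReal.ofReal |a n - a 0| + ENNReal.ofReal |a (n + 1) - a n| := ENNReal.ofReal_add_le
      _ ≤ _ := by rw [Finset.sum_range_succ]; gcongr

section MetricSpace

variable {X : Type*} [MetricSpace X]

theorem IsHolderWith.continuous_s10 {κ β : ℝ} {u : X → ℝ} (hu : IsHolderWith κ β u) (hβ : 0 < β) :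
    Continuous u := by
  refine continuous_iff_continuousAt.2 fun y => tendsto_iff_dist_tendsto_zero.2 ?_
  have hlim : Tendsto (fun x => |κ| * dist x y ^ β) (𝓝 y) (𝓝 0) := by
    have hd : Continuous fun x => dist x y := continuous_id.dist continuous_const
    have h := ((hd.rpow_const fun _ => .inr hβ.le).const_mul |κ|).tendsto y
    simpa [Real.zero_rpow hβ.ne'] using h
  refine squeeze_zero (fun _ => dist_nonneg) (fun x => ?_) hlim
  rw [Real.dist_eq]
  exact (hu x y).trans (by gcongr; exact le_abs_self κ)

theorem exists_dist_eq_of_le_dist [ConnectedSpace X] {y z : X} {s : ℝ} (hs : 0 ≤ s)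
    (hsz : s ≤ dist y z) : ∃ w, dist y w = s :=
  intermediate_value_univ y z (continuous_const.dist continuous_id) ⟨by simpa using hs, hsz⟩

theorem exists_lt_dist_of_ofReal_lt_ediam {t : ℝ}
    (h : ENNReal.ofReal t < ediam (univ : Set X)) (y : X) : ∃ z, t / 2 < dist y z := by
  by_contra! hle
  refine h.not_ge (ediam_le fun a _ b _ => ?_)
  rw [edist_dist]
  exact ENNReal.ofReal_le_ofReal (by linarith [dist_triangle_left a b y, hle a, hle b])

theorem dist_mem_Ioo_of_mem_ball {y z w : X} {ρ : ℝ} (hz : dist y z = 7 / 8 * ρ)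
    (hw : w ∈ ball z (ρ / 8)) : dist y w ∈ Ioo (3 / 4 * ρ) ρ := by
  rw [mem_ball] at hw
  refine ⟨?_, ?_⟩ <;> linarith [dist_triangle y w z, dist_triangle y z w, dist_comm z w]

theorem ball_subset_ball_two_pow_four {y z : X} {ρ : ℝ} (hρ : 0 < ρ)
    (hz : dist y z = 7 / 8 * ρ) : ball y ρ ⊆ ball z (2 ^ 4 * (ρ / 8)) := fun w hw => by
  rw [mem_ball] at hw ⊢
  linarith [dist_triangle w y z, dist_comm y z]

theorem ofReal_abs_sub_le_tsum_of_chain {β : ℝ} (hβ : 0 ≤ β) (hβ1 : β ≤ 1) {u : X → ℝ}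
    {g : X → ℝ≥0∞} {N : Set X}
    (hH : ∀ x ∉ N, ∀ y ∉ N,
      ENNReal.ofReal |u x - u y| ≤ ENNReal.ofReal (dist x y ^ β) * (g x + g y))
    {w : ℕ → X} (hw : ∀ i, w i ∉ N) {s : ℕ → ℝ} (hs : ∀ i, s i ≤ 2 * s (i + 1))
    (hstep : ∀ i, dist (w i) (w (i + 1)) ≤ 2 * s i) (n : ℕ) :
    ENNReal.ofReal |u (w n) - u (w 0)| ≤ 6 * ∑' i, ENNReal.ofReal (s i ^ β) * g (w i) := by
  set Q := fun i => ENNReal.ofReal (s i ^ β) * g (w i)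
  have hlink : ∀ i, ENNReal.ofReal |u (w (i + 1)) - u (w i)| ≤ 2 * Q i + 4 * Q (i + 1) := by
    intro i
    have hd := hstep i
    have h₂ := ENNReal.ofReal_rpow_le_mul_ofReal_rpow dist_nonneg one_le_two hβ hβ1 hd
    have h₄ := ENNReal.ofReal_rpow_le_mul_ofReal_rpow (s := s (i + 1)) dist_nonneg
      (by norm_num : (1 : ℝ) ≤ 4) hβ hβ1 (hd.trans (by linarith [hs i]))
    rw [ENNReal.ofReal_ofNat] at h₂ h₄
    calc ENNReal.ofReal |u (w (i + 1)) - u (w i)|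
        ≤ ENNReal.ofReal (dist (w i) (w (i + 1)) ^ β) * (g (w i) + g (w (i + 1))) := by
          rw [abs_sub_comm]; exact hH _ (hw i) _ (hw (i + 1))
      _ ≤ 2 * ENNReal.ofReal (s i ^ β) * g (w i) +
            4 * ENNReal.ofReal (s (i + 1) ^ β) * g (w (i + 1)) := by
          rw [mul_add]; gcongr
      _ = 2 * Q i + 4 * Q (i + 1) := by simp only [Q, mul_assoc]
  calc ENNReal.ofReal |u (w n) - u (w 0)|
      ≤ ∑ i ∈ Finset.range n, ENNReal.ofReal |u (w (i + 1)) - u (w i)| :=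
        ENNReal.ofReal_abs_sub_le_sum_range (fun i => u (w i)) n
    _ ≤ ∑ i ∈ Finset.range n, (2 * Q i + 4 * Q (i + 1)) := Finset.sum_le_sum fun i _ => hlink i
    _ = 2 * ∑ i ∈ Finset.range n, Q i + 4 * ∑ i ∈ Finset.range n, Q (i + 1) := by
        rw [Finset.sum_add_distrib, Finset.mul_sum, Finset.mul_sum]
    _ ≤ 2 * ∑' i, Q i + 4 * ∑' i, Q i := by
        gcongr
        · exact ENNReal.sum_le_tsum _
        · calc ∑ i ∈ Finset.range n, Q (i + 1) ≤ ∑ i ∈ Finset.range (n + 1), Q i := by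
                rw [Finset.sum_range_succ']; exact le_self_add
            _ ≤ ∑' i, Q i := ENNReal.sum_le_tsum _
    _ = 6 * ∑' i, Q i := by ring

variable [MeasurableSpace X] {μ : Measure X}

theorem measure_ball_two_pow_mul_le {c : ℝ≥0∞}
    (hdbl : ∀ x r, 0 < r → μ (ball x (2 * r)) ≤ c * μ (ball x r)) (z : X) {s : ℝ} (hs : 0 < s)
    (k : ℕ) : μ (ball z (2 ^ k * s)) ≤ c ^ k * μ (ball z s) := by
  induction k with
  | zero => simp
  | succ k ih =>
    calc μ (ball z (2 ^ (k + 1) * s)) = μ (ball z (2 * (2 ^ k * s))) := by ring_nf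
      _ ≤ c * μ (ball z (2 ^ k * s)) := hdbl z _ (by positivity)
      _ ≤ c * (c ^ k * μ (ball z s)) := by gcongr
      _ = c ^ (k + 1) * μ (ball z s) := by ring

theorem rieszPotential_const_mul {β : ℝ} {K : ℝ≥0∞} (hK : K ≠ ∞) (g : X → ℝ≥0∞) (y : X) :
    rieszPotential μ β (fun w => K * g w) y = K * rieszPotential μ β g y := by
  simp only [rieszPotential, mul_assoc]
  exact lintegral_const_mul' _ _ hK

theorem ofReal_rpow_div_le_rieszKernel {β s S : ℝ} (hβ : 0 ≤ β) (hs : 0 ≤ s) {y w : X}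
    (hsw : s ≤ dist y w) (hwS : dist y w ≤ S) :
    ENNReal.ofReal (s ^ β) / μ (ball y S) ≤ rieszKernel μ β y w :=
  ENNReal.div_le_div (ENNReal.ofReal_le_ofReal (Real.rpow_le_rpow hs hsw hβ))
    (measure_mono (ball_subset_ball hwS))

theorem ofReal_rpow_mul_setLAverage_le {β s S : ℝ} {A : ℝ≥0∞} (hβ : 0 ≤ β) (hs : 0 ≤ s)
    (hA₀ : A ≠ 0) (hA : A ≠ ∞) {y : X} {D : Set X} (hD : MeasurableSet D)
    (hDS : ∀ w ∈ D, dist y w ∈ Icc s S) (hμD : μ (ball y S) ≤ A * μ D) (g : X → ℝ≥0∞) :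
    ENNReal.ofReal (s ^ β) * ⨍⁻ w in D, g w ∂μ ≤
      A * ∫⁻ w in D, g w * rieszKernel μ β y w ∂μ := by
  set m := ENNReal.ofReal (s ^ β)
  set a := ∫⁻ w in D, g w ∂μ
  calc m * ⨍⁻ w in D, g w ∂μ = A * (m / (A * μ D) * a) := by
        rw [setLAverage_eq, div_eq_mul_inv, div_eq_mul_inv, ENNReal.mul_inv (.inl hA₀) (.inl hA),
          ← ENNReal.mul_inv_cancel_left hA₀ hA (b := m * (a * (μ D)⁻¹))]
        ring
    _ ≤ A * (m / μ (ball y S) * a) := by gcongr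
    _ ≤ A * ∫⁻ w in D, m / μ (ball y S) * g w ∂μ := by
        gcongr
        exact lintegral_const_mul_le _ _
    _ ≤ A * ∫⁻ w in D, g w * rieszKernel μ β y w ∂μ := by
        gcongr A * ?_
        refine setLIntegral_mono' hD fun w hw => ?_
        rw [mul_comm]
        gcongr
        exact ofReal_rpow_div_le_rieszKernel hβ hs (hDS w hw).1 (hDS w hw).2

theorem ofReal_rpow_mul_setLAverage_ball_le [OpensMeasurableSpace X] {c : ℝ≥0} (hc : c ≠ 0)
    (hdbl : ∀ x r, 0 < r → μ (ball x (2 * r)) ≤ (c : ℝ≥0∞) * μ (ball x r))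
    {β : ℝ} (hβ : 0 ≤ β) {y z : X} {ρ : ℝ} (hρ : 0 < ρ) (hz : dist y z = 7 / 8 * ρ)
    (g : X → ℝ≥0∞) :
    ENNReal.ofReal ((3 / 4 * ρ) ^ β) * ⨍⁻ w in ball z (ρ / 8), g w ∂μ ≤
      (c : ℝ≥0∞) ^ 4 * ∫⁻ w in ball z (ρ / 8), g w * rieszKernel μ β y w ∂μ := by
  refine ofReal_rpow_mul_setLAverage_le (S := ρ) hβ (by positivity) (by simpa using hc)
    (by simp) measurableSet_ball (fun w hw => Ioo_subset_Icc_self (dist_mem_Ioo_of_mem_ball hz hw))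
    ?_ g
  exact (measure_mono (ball_subset_ball_two_pow_four hρ hz)).trans
      (measure_ball_two_pow_mul_le hdbl z (by positivity) 4)

theorem exists_tendsto_forall_ofReal_abs_le_mul_rieszPotential [ConnectedSpace X]
    [OpensMeasurableSpace X]
    (hpos : ∀ x r, 0 < r → 0 < μ (ball x r)) (hfin : ∀ x r, μ (ball x r) < ∞)
    {c : ℝ≥0} (hc : c ≠ 0)
    (hdbl : ∀ x r, 0 < r → μ (ball x (2 * r)) ≤ (c : ℝ≥0∞) * μ (ball x r))
    {β : ℝ} (hβ : 0 ≤ β) (hβ1 : β ≤ 1) {u : X → ℝ} {g : X → ℝ≥0∞}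
    (hg : IsHajlaszGradient μ β u g) {y : X} {R : ℝ} (hR : 0 < R) (hfar : ∃ z, R ≤ dist y z)
    (hu0 : ∀ w, 3 / 4 * R < dist y w → u w = 0) :
    ∃ w : ℕ → X, Tendsto w atTop (𝓝 y) ∧
      ∀ n, ENNReal.ofReal |u (w n)| ≤ 6 * (c : ℝ≥0∞) ^ 4 * rieszPotential μ β g y := by
  obtain ⟨hgm, N, hN, hH⟩ := hg
  obtain ⟨z₀, hz₀⟩ := hfar
  set ρ : ℕ → ℝ := fun i => R / 2 ^ i
  have hρ : ∀ i, 0 < ρ i := fun i => by positivity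
  have hρ_succ : ∀ i, ρ i = 2 * ρ (i + 1) := fun i => by simp only [ρ, pow_succ]; field_simp
  have hρ_anti : Antitone ρ := fun i j hij =>
    div_le_div_of_nonneg_left hR.le (by positivity) (pow_le_pow_right₀ one_le_two hij)
  have hρR : ∀ i, ρ i ≤ R := fun i => div_le_self hR.le (one_le_pow₀ one_le_two)
  choose z hz using fun i => exists_dist_eq_of_le_dist (y := y) (z := z₀) (s := 7 / 8 * ρ i)
    (by linarith [hρ i]) (by linarith [hρ i, hρR i])
  set B : ℕ → Set X := fun i => ball (z i) (ρ i / 8)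
  have hB : ∀ i, ∀ v ∈ B i, dist y v ∈ Ioo (3 / 4 * ρ i) (ρ i) :=
    fun i v hv => dist_mem_Ioo_of_mem_ball (hz i) hv
  choose w hwB hwN hwg using fun i => exists_mem_notMem_le_setLAverage (s := B i) hN
    (hpos (z i) _ (by linarith [hρ i])).ne' (hfin (z i) _).ne hgm.aemeasurable
  have hdisj : Pairwise (Disjoint on B) := by
    refine (pairwise_disjoint_on B).2 fun i j hij => Set.disjoint_left.2 fun v hvi hvj => ?_
    linarith [(hB i v hvi).1, (hB j v hvj).2, hρ_succ i, hρ (i + 1),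
      (hρ_anti hij : ρ j ≤ ρ (i + 1))]
  set J := fun i => ∫⁻ v in B i, g v * rieszKernel μ β y v ∂μ
  have hQ : ∀ i, ENNReal.ofReal ((3 / 4 * ρ i) ^ β) * g (w i) ≤ (c : ℝ≥0∞) ^ 4 * J i :=
    fun i => (mul_le_mul_right (hwg i) _).trans
      (ofReal_rpow_mul_setLAverage_ball_le hc hdbl hβ (hρ i) (hz i) g)
  refine ⟨w, tendsto_iff_dist_tendsto_zero.2 (squeeze_zero (fun _ => dist_nonneg)
    (fun n => (dist_comm (w n) y).trans_le (hB n _ (hwB n)).2.le) ?_), fun n => ?_⟩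
  · exact tendsto_const_nhds.div_atTop (tendsto_pow_atTop_atTop_of_one_lt one_lt_two)
  have hw₀ : u (w 0) = 0 := hu0 _ (by simpa [ρ] using (hB 0 _ (hwB 0)).1)
  have hstep : ∀ i, dist (w i) (w (i + 1)) ≤ 2 * (3 / 4 * ρ i) := fun i => by
    linarith [dist_triangle_left (w i) (w (i + 1)) y, (hB i _ (hwB i)).2,
      (hB (i + 1) _ (hwB (i + 1))).2, hρ_succ i]
  have hchain := ofReal_abs_sub_le_tsum_of_chain hβ hβ1 hH hwN
    (fun i => by linarith [hρ_succ i]) hstep n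
  rw [hw₀, sub_zero] at hchain
  calc ENNReal.ofReal |u (w n)| ≤ 6 * ∑' i, (c : ℝ≥0∞) ^ 4 * J i := by
        refine hchain.trans ?_
        gcongr 6 * ?_
        exact ENNReal.tsum_le_tsum hQ
    _ ≤ 6 * (c : ℝ≥0∞) ^ 4 * rieszPotential μ β g y := by
        rw [ENNReal.tsum_mul_left, mul_assoc]
        gcongr
        exact tsum_setLIntegral_le_lintegral (fun i => measurableSet_ball) hdisj _

theorem ofReal_abs_le_mul_rieszPotential [ConnectedSpace X] [OpensMeasurableSpace X]
    (hpos : ∀ x r, 0 < r → 0 < μ (ball x r)) (hfin : ∀ x r, μ (ball x r) < ∞)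
    {c : ℝ≥0} (hc : c ≠ 0)
    (hdbl : ∀ x r, 0 < r → μ (ball x (2 * r)) ≤ (c : ℝ≥0∞) * μ (ball x r))
    {β : ℝ} (hβ : 0 < β) (hβ1 : β ≤ 1) {κ : ℝ} {u : X → ℝ} (hu : IsHolderWith κ β u)
    {g : X → ℝ≥0∞} (hg : IsHajlaszGradient μ β u g) {y : X} {R : ℝ} (hR : 0 < R)
    (hfar : ∃ z, R ≤ dist y z) (hu0 : ∀ w, 3 / 4 * R < dist y w → u w = 0) :
    ENNReal.ofReal |u y| ≤ 6 * (c : ℝ≥0∞) ^ 4 * rieszPotential μ β g y := by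
  obtain ⟨w, hwy, hw⟩ := exists_tendsto_forall_ofReal_abs_le_mul_rieszPotential hpos hfin hc
    hdbl hβ.le hβ1 hg hR hfar hu0
  have hlim : Tendsto (fun n => ENNReal.ofReal |u (w n)|) atTop (𝓝 (ENNReal.ofReal |u y|)) :=
    ((ENNReal.continuous_ofReal.comp (continuous_abs.comp (hu.continuous_s10 hβ))).tendsto y).comp
      hwy
  exact le_of_tendsto' hlim hw

theorem inv_rpow_mul_rieszCapacity_le_hajlaszCapacity {β p : ℝ} (hp : 0 ≤ p) {F Ω : Set X}
    {K : ℝ≥0} (hK : K ≠ 0)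
    (h : ∀ u g, (∃ κ, IsHolderWith κ β u) → (∀ y ∈ F, 1 ≤ u y) → (∀ y ∉ Ω, u y = 0) →
      IsHajlaszGradient μ β u g → ∀ y ∈ F, 1 ≤ K * rieszPotential μ β g y) :
    ((K ^ p)⁻¹ : ℝ≥0) * rieszCapacity μ β p F ≤ hajlaszCapacity μ β p F Ω := by
  refine le_sInf ?_
  rintro _ ⟨u, hu, hu1, hu0, g, hg, rfl⟩
  have hKp : (K : ℝ≥0∞) ^ p ≠ ∞ := ENNReal.rpow_ne_top_of_nonneg hp coe_ne_top
  have hcap : rieszCapacity μ β p F ≤ (K : ℝ≥0∞) ^ p * ∫⁻ x, g x ^ p ∂μ := by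
    refine sInf_le ⟨fun x => K * g x, hg.1.const_mul _, fun y hy => ?_, ?_⟩
    · rw [rieszPotential_const_mul coe_ne_top]
      exact h u g hu hu1 hu0 hg y hy
    · simp_rw [ENNReal.mul_rpow_of_nonneg _ _ hp]
      exact (lintegral_const_mul' _ _ hKp).symm
  calc ((K ^ p)⁻¹ : ℝ≥0) * rieszCapacity μ β p F
      ≤ ((K : ℝ≥0∞) ^ p)⁻¹ * ((K : ℝ≥0∞) ^ p * ∫⁻ x, g x ^ p ∂μ) := by
        rw [coe_inv (by positivity), coe_rpow_of_ne_zero hK]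
        gcongr
    _ = ∫⁻ x, g x ^ p ∂μ := ENNReal.inv_mul_cancel_left (by positivity) hKp

end MetricSpace

theorem stmt10_general {X : Type*} [MetricSpace X] [MeasurableSpace X] [BorelSpace X]
    [ConnectedSpace X]
    (μ : Measure X)
    (hpos : ∀ (x : X) (r : ℝ), 0 < r → 0 < μ (ball x r))
    (hfin : ∀ (x : X) (r : ℝ), μ (ball x r) < ∞)
    (c : ℝ≥0)
    (hdbl : ∀ (x : X) (r : ℝ), 0 < r → μ (ball x (2 * r)) ≤ (c : ℝ≥0∞) * μ (ball x r))
    (p β : ℝ) (hp : 1 ≤ p) (hβ : 0 < β) (hβ1 : β ≤ 1) :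
    ∃ C : ℝ≥0, 0 < C ∧
      ∀ (E : Set X) (x : X) (r : ℝ), IsClosed E → x ∈ E → 0 < r →
        ENNReal.ofReal (8 * r) < EMetric.diam (univ : Set X) →
        (C : ℝ≥0∞) * rieszCapacity μ β p (E ∩ closure (ball x r)) ≤
          hajlaszCapacity μ β p (E ∩ closure (ball x r)) (ball x (2 * r)) := by
  obtain ⟨x₀⟩ : Nonempty X := inferInstance
  have hc : c ≠ 0 := by
    rintro rfl
    simpa using (hpos x₀ (2 * 1) (by norm_num)).trans_le (hdbl x₀ 1 one_pos)
  refine ⟨((6 * c ^ 4) ^ p)⁻¹, by positivity, fun E x r _ _ hr hdiam => ?_⟩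
  refine inv_rpow_mul_rieszCapacity_le_hajlaszCapacity (by linarith) (by positivity)
    fun u g ⟨κ, hu⟩ hu1 hu0 hg y hy => ?_
  have hyx : dist y x ≤ r := mem_closedBall.1 (closure_ball_subset_closedBall hy.2)
  obtain ⟨z, hz⟩ := exists_lt_dist_of_ofReal_lt_ediam hdiam y
  have hu0' : ∀ w, 3 / 4 * (4 * r) < dist y w → u w = 0 := fun w hw =>
    hu0 w fun hxw => by linarith [mem_ball'.1 hxw, dist_triangle y x w]
  calc (1 : ℝ≥0∞) ≤ ENNReal.ofReal |u y| := by
        simpa using ENNReal.ofReal_le_ofReal ((hu1 y hy).trans (le_abs_self _))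
    _ ≤ 6 * (c : ℝ≥0∞) ^ 4 * rieszPotential μ β g y :=
        ofReal_abs_le_mul_rieszPotential hpos hfin hc hdbl hβ hβ1 hu hg (by positivity)
          ⟨z, by linarith⟩ hu0'
    _ = _ := by push_cast; rfl

theorem stmt10 {X : Type*} [MetricSpace X] [MeasurableSpace X] [BorelSpace X]
    [Nontrivial X] [ConnectedSpace X]
    (μ : Measure X)
    (hpos : ∀ (x : X) (r : ℝ), 0 < r → 0 < μ (ball x r))
    (hfin : ∀ (x : X) (r : ℝ), μ (ball x r) < ∞)
    (c : ℝ≥0) (hc : 1 < c)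
    (hdbl : ∀ (x : X) (r : ℝ), 0 < r → μ (ball x (2 * r)) ≤ (c : ℝ≥0∞) * μ (ball x r))
    (p β : ℝ) (hp : 1 ≤ p) (hβ : 0 < β) (hβ1 : β ≤ 1) :
    ∃ C : ℝ≥0, 0 < C ∧
      ∀ (E : Set X) (x : X) (r : ℝ), IsClosed E → x ∈ E → 0 < r →
        ENNReal.ofReal (8 * r) < EMetric.diam (univ : Set X) →
        (C : ℝ≥0∞) * rieszCapacity μ β p (E ∩ closure (ball x r)) ≤
          hajlaszCapacity μ β p (E ∩ closure (ball x r)) (ball x (2 * r)) :=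
  stmt10_general μ hpos hfin c hdbl p β hp hβ hβ1
end

section
/- Let q > 0. The following are equivalent for a metric measure space X with doubling measure μ: (i) there is c_q > 0 with μ(B(x,r))/μ(B(x,R)) ≤ c_q (r/R)^q for all x ∈ X and 0 < r < R ≤ 2 diam(X); (ii) there is C₂ > 0 such that H^{μ,q}_r(F) ≤ C₂ H^{μ,q}_{2 diam(X)}(F) whenever F ⊂ closure of B(x,r) with x ∈ X, r > 0; (iii) there is C₃ > 0 such that r^{−q} μ(B(x,r)) ≤ C₃ H^{μ,q}_{2 diam(X)}(B(x,r)) for all x ∈ X and r > 0. -/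
/-
(ii) ⇒ (iii): every ball of a cover at scale `r` has radius at most `r`, so
`r^{-q} μ(B(x,r)) ≤ H_r(B(x,r))`.
(iii) ⇒ (i): `H_ρ(B(x,r)) ≤ H_ρ(B(x,R)) ≤ R^{-q} μ(B(x,R))`, using `B(x,R)` as a one-ball cover.
(i) ⇒ (ii): take a cover of `F ⊆ B̄(x,r)` at scale `ρ`. If every ball meeting `F` has radius at
most `r`, these balls already form a cover at scale `r`. Otherwise some ball `B(y,R)` with `R > r`
meets `F`; covering `B̄(x,r)` by balls of radius `r` around a maximal family of disjoint
`r/5`-balls (5r-covering lemma) gives `H_r(F) ≲ r^{-q} μ(B(x,r))` by doubling, and (i) together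
with doubling bounds this by a multiple of the single term `R^{-q} μ(B(y,R))`.
-/

open MeasureTheory Metric Set ENNReal NNReal

/-- The `ρ`-restricted Hausdorff content of codimension `q` of `F`, defined via
countable covers by balls with radii at most `ρ`. -/
noncomputable def hContent {X : Type*} [MetricSpace X] [MeasurableSpace X]
    (μ : Measure X) (q : ℝ) (ρ : ℝ≥0∞) (F : Set X) : ℝ≥0∞ :=
  sInf { t | ∃ S : Set (X × ℝ), S.Countable ∧
    (∀ b ∈ S, 0 < b.2 ∧ ENNReal.ofReal b.2 ≤ ρ) ∧
    F ⊆ ⋃ b ∈ S, ball b.1 b.2 ∧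
    t = ∑' b : S, μ (ball (b : X × ℝ).1 (b : X × ℝ).2) *
          ENNReal.ofReal ((b : X × ℝ).2 ^ (-q)) }

theorem Set.PairwiseDisjoint.countable_of_measure_pos {X ι : Type*} [MeasurableSpace X]
    {μ : Measure X} {T : Set ι} {s : ι → Set X} (hT : T.PairwiseDisjoint s)
    (hs : ∀ i ∈ T, MeasurableSet (s i)) (hpos : ∀ i ∈ T, 0 < μ (s i))
    (hfin : μ (⋃ i ∈ T, s i) ≠ ∞) : T.Countable := by
  have hcount := Measure.countable_meas_pos_of_disjoint_of_meas_iUnion_ne_top μ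
    (As := fun i : T => s i) (fun i => hs i i.2)
    (fun i j hij => hT i.2 j.2 (Subtype.coe_ne_coe.mpr hij)) (by rwa [iUnion_subtype])
  rw [show {i : T | 0 < μ (s i)} = univ from eq_univ_of_forall fun i => hpos i i.2,
    countable_univ_iff] at hcount
  exact countable_coe_iff.mp hcount

section

variable {X : Type*} [MetricSpace X] [MeasurableSpace X] {μ : Measure X}

theorem exists_countable_pairwiseDisjoint_closedBall_cover
    (hpos : ∀ (x : X) (r : ℝ), 0 < r → 0 < μ (ball x r))
    (hfin : ∀ (x : X) (r : ℝ), μ (ball x r) < ∞) [OpensMeasurableSpace X]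
    (x : X) (R : ℝ) {δ : ℝ} (hδ : 0 < δ) :
    ∃ T ⊆ closedBall x R, T.Countable ∧ T.PairwiseDisjoint (closedBall · δ) ∧
      closedBall x R ⊆ ⋃ t ∈ T, ball t (5 * δ) := by
  obtain ⟨T, hTR, hTdisj, hTcov⟩ :=
    Vitali.exists_disjoint_subfamily_covering_enlargement_closedBall (closedBall x R) id
      (fun _ => δ) δ (fun _ _ => le_rfl) 4 (by norm_num)
  refine ⟨T, hTR, ?_, hTdisj, fun y hy => ?_⟩
  · refine hTdisj.countable_of_measure_pos (fun _ _ => measurableSet_closedBall)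
      (fun t _ => (hpos t δ hδ).trans_le (measure_mono ball_subset_closedBall))
      (ne_top_of_le_ne_top (hfin x (R + 2 * δ)).ne (measure_mono ?_))
    refine iUnion₂_subset fun t ht => closedBall_subset_ball' ?_
    have htx : dist t x ≤ R := hTR ht
    change δ + dist t x < R + 2 * δ
    linarith
  · obtain ⟨t, ht, hyt⟩ := hTcov y hy
    have : dist y t ≤ 4 * δ := mem_closedBall.mp (hyt (mem_closedBall_self hδ.le))
    exact mem_biUnion ht (mem_ball.mpr (by linarith))

noncomputable def ballCoverSum (μ : Measure X) (q : ℝ) (S : Set (X × ℝ)) : ℝ≥0∞ :=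
  ∑' b : S, μ (ball (b : X × ℝ).1 (b : X × ℝ).2) * ENNReal.ofReal ((b : X × ℝ).2 ^ (-q))

variable {q : ℝ} {ρ : ℝ≥0∞} {F : Set X}

theorem hContent_le_ballCoverSum {S : Set (X × ℝ)} (hS : S.Countable)
    (hrad : ∀ b ∈ S, 0 < b.2 ∧ ENNReal.ofReal b.2 ≤ ρ) (hcov : F ⊆ ⋃ b ∈ S, ball b.1 b.2) :
    hContent μ q ρ F ≤ ballCoverSum μ q S :=
  sInf_le ⟨S, hS, hrad, hcov, rfl⟩

theorem ballCoverSum_mono {S S' : Set (X × ℝ)} (h : S ⊆ S') :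
    ballCoverSum μ q S ≤ ballCoverSum μ q S' :=
  ENNReal.tsum_mono_subtype (fun b : X × ℝ => μ (ball b.1 b.2) * ENNReal.ofReal (b.2 ^ (-q))) h

theorem hContent_le_ballCoverSum_of_inter_nonempty {S : Set (X × ℝ)} (hS : S.Countable)
    (hrad : ∀ b ∈ S, 0 < b.2) (hcov : F ⊆ ⋃ b ∈ S, ball b.1 b.2)
    (hsmall : ∀ b ∈ S, (ball b.1 b.2 ∩ F).Nonempty → ENNReal.ofReal b.2 ≤ ρ) :
    hContent μ q ρ F ≤ ballCoverSum μ q S := by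
  set S' := {b ∈ S | (ball b.1 b.2 ∩ F).Nonempty}
  refine (hContent_le_ballCoverSum (hS.mono (sep_subset _ _))
    (fun b hb => ⟨hrad b hb.1, hsmall b hb.1 hb.2⟩) fun y hy => ?_).trans
    (ballCoverSum_mono (sep_subset _ _))
  obtain ⟨b, hbS, hyb⟩ := mem_iUnion₂.mp (hcov hy)
  exact mem_biUnion (show b ∈ S' from ⟨hbS, y, hyb, hy⟩) hyb

theorem le_mul_hContent {C a : ℝ≥0∞} (hC₀ : C ≠ 0) (hC : C ≠ ∞)
    (h : ∀ S : Set (X × ℝ), S.Countable → (∀ b ∈ S, 0 < b.2 ∧ ENNReal.ofReal b.2 ≤ ρ) →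
      F ⊆ ⋃ b ∈ S, ball b.1 b.2 → a ≤ C * ballCoverSum μ q S) :
    a ≤ C * hContent μ q ρ F := by
  rw [hContent, sInf_eq_iInf', ENNReal.mul_iInf_of_ne hC₀ hC]
  refine le_iInf fun ⟨t, S, hS, hrad, hcov, ht⟩ => ?_
  subst ht
  exact h S hS hrad hcov

theorem hContent_mono {F' : Set X} (h : F ⊆ F') : hContent μ q ρ F ≤ hContent μ q ρ F' :=
  sInf_le_sInf fun _ ⟨S, hS, hrad, hcov, ht⟩ => ⟨S, hS, hrad, h.trans hcov, ht⟩

theorem hContent_le_tsum_of_subset_biUnion_ball {T : Set X} (hT : T.Countable) {s : ℝ}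
    (hs : 0 < s) (hsρ : ENNReal.ofReal s ≤ ρ) (hF : F ⊆ ⋃ t ∈ T, ball t s) :
    hContent μ q ρ F ≤ (∑' t : T, μ (ball t s)) * ENNReal.ofReal (s ^ (-q)) := by
  have hinj : InjOn (fun t : X => (t, s)) T := fun _ _ _ _ h => congrArg Prod.fst h
  calc hContent μ q ρ F ≤ ballCoverSum μ q ((fun t => (t, s)) '' T) := by
        refine hContent_le_ballCoverSum (hT.image _) ?_ (by rwa [biUnion_image])
        rintro _ ⟨t, -, rfl⟩
        exact ⟨hs, hsρ⟩
    _ = (∑' t : T, μ (ball t s)) * ENNReal.ofReal (s ^ (-q)) := by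
        rw [ballCoverSum, tsum_image (fun b : X × ℝ => μ (ball b.1 b.2) *
          ENNReal.ofReal (b.2 ^ (-q))) hinj]
        dsimp only
        exact ENNReal.tsum_mul_right

theorem hContent_ball_le {x : X} {r : ℝ} (hr : 0 < r) (hrρ : ENNReal.ofReal r ≤ ρ) :
    hContent μ q ρ (ball x r) ≤ μ (ball x r) * ENNReal.ofReal (r ^ (-q)) := by
  simpa using hContent_le_tsum_of_subset_biUnion_ball (μ := μ) (q := q) (countable_singleton x)
    hr hrρ (by simp)

theorem rpow_neg_mul_measure_le_hContent (hq : 0 ≤ q) {r : ℝ} (hr : 0 < r) :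
    ENNReal.ofReal (r ^ (-q)) * μ F ≤ hContent μ q (ENNReal.ofReal r) F := by
  refine le_sInf ?_
  rintro _ ⟨S, hS, hrad, hcov, rfl⟩
  calc ENNReal.ofReal (r ^ (-q)) * μ F
      ≤ ENNReal.ofReal (r ^ (-q)) * ∑' b : S, μ (ball (b : X × ℝ).1 (b : X × ℝ).2) := by
        gcongr
        exact (measure_mono hcov).trans (measure_biUnion_le μ hS _)
    _ = ∑' b : S, μ (ball (b : X × ℝ).1 (b : X × ℝ).2) * ENNReal.ofReal (r ^ (-q)) := by
        rw [mul_comm, ENNReal.tsum_mul_right]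
    _ ≤ _ := by
        refine ENNReal.tsum_le_tsum fun b => ?_
        obtain ⟨hb, hbr⟩ := hrad b b.2
        gcongr _ * ENNReal.ofReal ?_
        exact Real.rpow_le_rpow_of_nonpos hb ((ENNReal.ofReal_le_ofReal_iff hr.le).mp hbr)
          (neg_nonpos.mpr hq)

theorem measure_ball_le_pow_mul {c : ℝ≥0}
    (hdbl : ∀ (x : X) (r : ℝ), 0 < r → μ (ball x (2 * r)) ≤ (c : ℝ≥0∞) * μ (ball x r))
    (n : ℕ) (x : X) {r s : ℝ} (hr : 0 < r) (hs : s ≤ 2 ^ n * r) :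
    μ (ball x s) ≤ (c : ℝ≥0∞) ^ n * μ (ball x r) := by
  induction n generalizing r with
  | zero => simpa using measure_mono (ball_subset_ball (by simpa using hs))
  | succ n ih =>
    calc μ (ball x s) ≤ (c : ℝ≥0∞) ^ n * μ (ball x (2 * r)) :=
          ih (by positivity) (by rw [pow_succ] at hs; linarith)
      _ ≤ (c : ℝ≥0∞) ^ n * ((c : ℝ≥0∞) * μ (ball x r)) := by gcongr; exact hdbl x r hr
      _ = (c : ℝ≥0∞) ^ (n + 1) * μ (ball x r) := by ring

theorem hContent_closedBall_le [OpensMeasurableSpace X]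
    (hpos : ∀ (x : X) (r : ℝ), 0 < r → 0 < μ (ball x r))
    (hfin : ∀ (x : X) (r : ℝ), μ (ball x r) < ∞) {c : ℝ≥0}
    (hdbl : ∀ (x : X) (r : ℝ), 0 < r → μ (ball x (2 * r)) ≤ (c : ℝ≥0∞) * μ (ball x r))
    (x : X) {r : ℝ} (hr : 0 < r) :
    hContent μ q (ENNReal.ofReal r) (closedBall x r) ≤
      (c : ℝ≥0∞) ^ 4 * (μ (ball x r) * ENNReal.ofReal (r ^ (-q))) := by
  obtain ⟨T, hTx, hT, hTdisj, hTcov⟩ :=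
    exists_countable_pairwiseDisjoint_closedBall_cover hpos hfin x r (δ := r / 5) (by positivity)
  rw [show 5 * (r / 5) = r by ring] at hTcov
  have hpacking : ∑' t : T, μ (ball t (r / 5)) ≤ μ (ball x (2 * r)) := by
    rw [← measure_biUnion hT (hTdisj.mono fun _ => ball_subset_closedBall)
      fun _ _ => measurableSet_ball]
    refine measure_mono (iUnion₂_subset fun t ht => ball_subset_ball' ?_)
    linarith [mem_closedBall.mp (hTx ht)]
  calc hContent μ q (ENNReal.ofReal r) (closedBall x r)
      ≤ (∑' t : T, μ (ball t r)) * ENNReal.ofReal (r ^ (-q)) :=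
        hContent_le_tsum_of_subset_biUnion_ball hT hr le_rfl hTcov
    _ ≤ (∑' t : T, (c : ℝ≥0∞) ^ 3 * μ (ball t (r / 5))) * ENNReal.ofReal (r ^ (-q)) := by
        gcongr with t
        exact measure_ball_le_pow_mul hdbl 3 t (by positivity) (by linarith)
    _ ≤ (c : ℝ≥0∞) ^ 3 * ((c : ℝ≥0∞) * μ (ball x r)) * ENNReal.ofReal (r ^ (-q)) := by
        rw [ENNReal.tsum_mul_left]
        gcongr
        exact hpacking.trans (hdbl x r hr)
    _ = (c : ℝ≥0∞) ^ 4 * (μ (ball x r) * ENNReal.ofReal (r ^ (-q))) := by ring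

/- Conditions (i), (ii), (iii) with explicit constants, at an arbitrary scale `ρ` in place of
`2 diam X`. -/
def ReverseDoublingWith (μ : Measure X) (q : ℝ) (ρ : ℝ≥0∞) (cq : ℝ) : Prop :=
  ∀ (x : X) (r R : ℝ), 0 < r → r < R → ENNReal.ofReal R ≤ ρ →
    μ (ball x r) ≤ ENNReal.ofReal (cq * (r / R) ^ q) * μ (ball x R)

def HContentComparableWith (μ : Measure X) (q : ℝ) (ρ : ℝ≥0∞) (C : ℝ≥0) : Prop :=
  ∀ (x : X) (r : ℝ) (F : Set X), 0 < r → F ⊆ closure (ball x r) →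
    hContent μ q (ENNReal.ofReal r) F ≤ (C : ℝ≥0∞) * hContent μ q ρ F

def BallHContentLowerBoundWith (μ : Measure X) (q : ℝ) (ρ : ℝ≥0∞) (C : ℝ≥0) : Prop :=
  ∀ (x : X) (r : ℝ), 0 < r →
    ENNReal.ofReal (r ^ (-q)) * μ (ball x r) ≤ (C : ℝ≥0∞) * hContent μ q ρ (ball x r)

theorem ReverseDoublingWith.measure_ball_mul_rpow_neg_le {cq : ℝ} {c : ℝ≥0}
    (hdbl : ∀ (x : X) (r : ℝ), 0 < r → μ (ball x (2 * r)) ≤ (c : ℝ≥0∞) * μ (ball x r))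
    (h : ReverseDoublingWith μ q ρ cq) {x y : X} {r R : ℝ} (hr : 0 < r) (hrR : r < R)
    (hRρ : ENNReal.ofReal R ≤ ρ) (hxy : dist x y < 2 * R) :
    μ (ball x r) * ENNReal.ofReal (r ^ (-q)) ≤
      ENNReal.ofReal cq * (c : ℝ≥0∞) ^ 2 * (μ (ball y R) * ENNReal.ofReal (R ^ (-q))) := by
  have hR : 0 < R := hr.trans hrR
  have hscale : ENNReal.ofReal (cq * (r / R) ^ q) * ENNReal.ofReal (r ^ (-q)) =
      ENNReal.ofReal cq * ENNReal.ofReal (R ^ (-q)) := by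
    rw [← ENNReal.ofReal_mul' (by positivity), ← ENNReal.ofReal_mul' (by positivity),
      Real.div_rpow hr.le hR.le, Real.rpow_neg hr.le, Real.rpow_neg hR.le]
    congr 1
    have : 0 < r ^ q := by positivity
    field_simp
  have hcentre : μ (ball x R) ≤ (c : ℝ≥0∞) ^ 2 * μ (ball y R) :=
    (measure_mono (ball_subset_ball' (by linarith : R + dist x y ≤ 4 * R))).trans
      (measure_ball_le_pow_mul hdbl 2 y hR (by norm_num))
  calc μ (ball x r) * ENNReal.ofReal (r ^ (-q))
      ≤ ENNReal.ofReal (cq * (r / R) ^ q) * μ (ball x R) * ENNReal.ofReal (r ^ (-q)) := by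
        gcongr
        exact h x r R hr hrR hRρ
    _ = ENNReal.ofReal cq * ENNReal.ofReal (R ^ (-q)) * μ (ball x R) := by
        rw [mul_right_comm, hscale]
    _ ≤ ENNReal.ofReal cq * ENNReal.ofReal (R ^ (-q)) * ((c : ℝ≥0∞) ^ 2 * μ (ball y R)) := by
        gcongr
    _ = _ := by ring

theorem ReverseDoublingWith.hContentComparableWith [OpensMeasurableSpace X]
    (hpos : ∀ (x : X) (r : ℝ), 0 < r → 0 < μ (ball x r))
    (hfin : ∀ (x : X) (r : ℝ), μ (ball x r) < ∞) {c : ℝ≥0}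
    (hdbl : ∀ (x : X) (r : ℝ), 0 < r → μ (ball x (2 * r)) ≤ (c : ℝ≥0∞) * μ (ball x r))
    {cq : ℝ} (h : ReverseDoublingWith μ q ρ cq) :
    HContentComparableWith μ q ρ (1 + cq.toNNReal * c ^ 6) := by
  intro x r F hr hF
  have hFx : F ⊆ closedBall x r := hF.trans closure_ball_subset_closedBall
  refine le_mul_hContent (by simp) ENNReal.coe_ne_top fun S hS hrad hcov => ?_
  by_cases hlarge : ∃ b ∈ S, r < b.2 ∧ (ball b.1 b.2 ∩ F).Nonempty
  · obtain ⟨b, hbS, hrb, z, hzb, hzF⟩ := hlarge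
    have hxb : dist x b.1 < 2 * b.2 := by
      linarith [dist_triangle x z b.1, dist_comm x z, mem_closedBall.mp (hFx hzF), mem_ball.mp hzb]
    calc hContent μ q (ENNReal.ofReal r) F
        ≤ hContent μ q (ENNReal.ofReal r) (closedBall x r) := hContent_mono hFx
      _ ≤ (c : ℝ≥0∞) ^ 4 * (μ (ball x r) * ENNReal.ofReal (r ^ (-q))) :=
          hContent_closedBall_le hpos hfin hdbl x hr
      _ ≤ (c : ℝ≥0∞) ^ 4 * (ENNReal.ofReal cq * (c : ℝ≥0∞) ^ 2 *
            (μ (ball b.1 b.2) * ENNReal.ofReal (b.2 ^ (-q)))) := by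
          gcongr (c : ℝ≥0∞) ^ 4 * ?_
          exact h.measure_ball_mul_rpow_neg_le hdbl hr hrb (hrad b hbS).2 hxb
      _ ≤ (c : ℝ≥0∞) ^ 4 * (ENNReal.ofReal cq * (c : ℝ≥0∞) ^ 2 * ballCoverSum μ q S) := by
          gcongr
          exact ENNReal.le_tsum (⟨b, hbS⟩ : S)
      _ = ((cq.toNNReal * c ^ 6 : ℝ≥0) : ℝ≥0∞) * ballCoverSum μ q S := by
          rw [ENNReal.ofReal]
          push_cast
          ring
      _ ≤ _ := by gcongr; exact le_add_self
  · push Not at hlarge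
    have hsmall (b) (hb : b ∈ S) (hne : (ball b.1 b.2 ∩ F).Nonempty) :
        ENNReal.ofReal b.2 ≤ ENNReal.ofReal r :=
      ENNReal.ofReal_le_ofReal (not_lt.mp fun hrb => hne.ne_empty (hlarge b hb hrb))
    exact (hContent_le_ballCoverSum_of_inter_nonempty hS (fun b hb => (hrad b hb).1) hcov
      hsmall).trans (le_mul_of_one_le_left bot_le (by simp))

theorem HContentComparableWith.ballHContentLowerBoundWith (hq : 0 ≤ q) {C : ℝ≥0}
    (h : HContentComparableWith μ q ρ C) : BallHContentLowerBoundWith μ q ρ C :=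
  fun x r hr => (rpow_neg_mul_measure_le_hContent hq hr).trans (h x r _ hr subset_closure)

theorem BallHContentLowerBoundWith.reverseDoublingWith {C : ℝ≥0}
    (h : BallHContentLowerBoundWith μ q ρ C) : ReverseDoublingWith μ q ρ C := by
  intro x r R hr hrR hRρ
  have hR : 0 < R := hr.trans hrR
  have hcancel : ENNReal.ofReal (r ^ q) * ENNReal.ofReal (r ^ (-q)) = 1 := by
    rw [← ENNReal.ofReal_mul (by positivity), ← Real.rpow_add hr, add_neg_cancel,
      Real.rpow_zero, ENNReal.ofReal_one]
  have hupper : ENNReal.ofReal (r ^ (-q)) * μ (ball x r) ≤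
      (C : ℝ≥0∞) * (μ (ball x R) * ENNReal.ofReal (R ^ (-q))) :=
    (h x r hr).trans (by
      gcongr
      exact (hContent_mono (ball_subset_ball hrR.le)).trans (hContent_ball_le hR hRρ))
  calc μ (ball x r) = ENNReal.ofReal (r ^ q) * (ENNReal.ofReal (r ^ (-q)) * μ (ball x r)) := by
        rw [← mul_assoc, hcancel, one_mul]
    _ ≤ ENNReal.ofReal (r ^ q) * ((C : ℝ≥0∞) * (μ (ball x R) * ENNReal.ofReal (R ^ (-q)))) := by
        gcongr
    _ = ENNReal.ofReal (C * (r / R) ^ q) * μ (ball x R) := by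
        rw [Real.div_rpow hr.le hR.le, div_eq_mul_inv, ← Real.rpow_neg hR.le,
          ENNReal.ofReal_mul C.coe_nonneg, ENNReal.ofReal_mul (by positivity),
          ENNReal.ofReal_coe_nnreal]
        ring

end

theorem stmt13_general {X : Type*} [MetricSpace X] [MeasurableSpace X] [BorelSpace X]
    (μ : Measure X)
    (hpos : ∀ (x : X) (r : ℝ), 0 < r → 0 < μ (ball x r))
    (hfin : ∀ (x : X) (r : ℝ), μ (ball x r) < ∞)
    (c : ℝ≥0)
    (hdbl : ∀ (x : X) (r : ℝ), 0 < r → μ (ball x (2 * r)) ≤ (c : ℝ≥0∞) * μ (ball x r))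
    (q : ℝ) (hq : 0 < q) :
    ((∃ cq : ℝ, 0 < cq ∧ ∀ (x : X) (r R : ℝ), 0 < r → r < R →
        ENNReal.ofReal R ≤ 2 * EMetric.diam (univ : Set X) →
        μ (ball x r) ≤ ENNReal.ofReal (cq * (r / R) ^ q) * μ (ball x R)) ↔
      (∃ C₂ : ℝ≥0, 0 < C₂ ∧ ∀ (x : X) (r : ℝ) (F : Set X), 0 < r →
        F ⊆ closure (ball x r) →
        hContent μ q (ENNReal.ofReal r) F ≤
          (C₂ : ℝ≥0∞) * hContent μ q (2 * EMetric.diam (univ : Set X)) F)) ∧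
    ((∃ C₂ : ℝ≥0, 0 < C₂ ∧ ∀ (x : X) (r : ℝ) (F : Set X), 0 < r →
        F ⊆ closure (ball x r) →
        hContent μ q (ENNReal.ofReal r) F ≤
          (C₂ : ℝ≥0∞) * hContent μ q (2 * EMetric.diam (univ : Set X)) F) ↔
      (∃ C₃ : ℝ≥0, 0 < C₃ ∧ ∀ (x : X) (r : ℝ), 0 < r →
        ENNReal.ofReal (r ^ (-q)) * μ (ball x r) ≤
          (C₃ : ℝ≥0∞) * hContent μ q (2 * EMetric.diam (univ : Set X)) (ball x r))) := by
  set ρ := 2 * EMetric.diam (univ : Set X)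
  have h12 (cq : ℝ) (h : ReverseDoublingWith μ q ρ cq) :
      ∃ C₂ : ℝ≥0, 0 < C₂ ∧ HContentComparableWith μ q ρ C₂ :=
    ⟨_, by positivity, h.hContentComparableWith hpos hfin hdbl⟩
  have h23 {C : ℝ≥0} : HContentComparableWith μ q ρ C → BallHContentLowerBoundWith μ q ρ C :=
    HContentComparableWith.ballHContentLowerBoundWith hq.le
  have h31 {C : ℝ≥0} : BallHContentLowerBoundWith μ q ρ C → ReverseDoublingWith μ q ρ C :=
    BallHContentLowerBoundWith.reverseDoublingWith
  exact ⟨⟨fun ⟨cq, _, h⟩ => h12 cq h, fun ⟨C, hC, h⟩ => ⟨C, NNReal.coe_pos.mpr hC, h31 (h23 h)⟩⟩,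
    fun ⟨C, hC, h⟩ => ⟨C, hC, h23 h⟩, fun ⟨C, _, h⟩ => h12 C (h31 h)⟩

theorem stmt13 {X : Type*} [MetricSpace X] [MeasurableSpace X] [BorelSpace X]
    (μ : Measure X)
    (hpos : ∀ (x : X) (r : ℝ), 0 < r → 0 < μ (ball x r))
    (hfin : ∀ (x : X) (r : ℝ), μ (ball x r) < ∞)
    (c : ℝ≥0) (hc : 1 < c)
    (hdbl : ∀ (x : X) (r : ℝ), 0 < r → μ (ball x (2 * r)) ≤ (c : ℝ≥0∞) * μ (ball x r))
    (q : ℝ) (hq : 0 < q) :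
    ((∃ cq : ℝ, 0 < cq ∧ ∀ (x : X) (r R : ℝ), 0 < r → r < R →
        ENNReal.ofReal R ≤ 2 * EMetric.diam (univ : Set X) →
        μ (ball x r) ≤ ENNReal.ofReal (cq * (r / R) ^ q) * μ (ball x R)) ↔
      (∃ C₂ : ℝ≥0, 0 < C₂ ∧ ∀ (x : X) (r : ℝ) (F : Set X), 0 < r →
        F ⊆ closure (ball x r) →
        hContent μ q (ENNReal.ofReal r) F ≤
          (C₂ : ℝ≥0∞) * hContent μ q (2 * EMetric.diam (univ : Set X)) F)) ∧
    ((∃ C₂ : ℝ≥0, 0 < C₂ ∧ ∀ (x : X) (r : ℝ) (F : Set X), 0 < r →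
        F ⊆ closure (ball x r) →
        hContent μ q (ENNReal.ofReal r) F ≤
          (C₂ : ℝ≥0∞) * hContent μ q (2 * EMetric.diam (univ : Set X)) F) ↔
      (∃ C₃ : ℝ≥0, 0 < C₃ ∧ ∀ (x : X) (r : ℝ), 0 < r →
        ENNReal.ofReal (r ^ (-q)) * μ (ball x r) ≤
          (C₃ : ℝ≥0∞) * hContent μ q (2 * EMetric.diam (univ : Set X)) (ball x r))) :=
  stmt13_general μ hpos hfin c hdbl q hq
end

section
/- Let 1 < p < ∞, let Ω ⊂ X be a bounded open set and F ⊂ Ω closed. Then the variational p-capacity satisfies cap_p(F,Ω) ≤ 4^p cap_{1,p}(F,Ω), where cap_{1,p} is the Hajłasz (1,p)-capacity. The key step: if u is Lipschitz and g is a Hajłasz 1-gradient of u (valid for all points after redefining g on a null set), then 4g is a p-weak upper gradient of u. -/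
open MeasureTheory Metric Set ENNReal NNReal

/-- The integral of `g` along a curve `γ` parametrized by arc length on `[0, L]`. -/
noncomputable def curveLintegral {X : Type*} (g : X → ℝ≥0∞) (γ : ℝ → X) (L : ℝ) : ℝ≥0∞ :=
  ∫⁻ t in Set.Icc 0 L, g (γ t)

/-- `g` is a `p`-weak upper gradient of `u`: the upper gradient inequality holds
along every nonconstant `1`-Lipschitz (arc-length parametrized) curve except for a
family of curves on which some fixed nonnegative Borel function `ρ ∈ L^p_loc`
has infinite line integral. -/
def IsPWeakUpperGradient {X : Type*} [MetricSpace X] [MeasurableSpace X]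
    (μ : Measure X) (p : ℝ) (u : X → ℝ) (g : X → ℝ≥0∞) : Prop :=
  Measurable g ∧ ∃ ρ : X → ℝ≥0∞, Measurable ρ ∧
    (∀ x : X, ∃ r : ℝ, 0 < r ∧ ∫⁻ y in ball x r, ρ y ^ p ∂μ < ∞) ∧
    ∀ (γ : ℝ → X) (L : ℝ), 0 < L → LipschitzWith 1 γ →
      curveLintegral ρ γ L ≠ ∞ →
      ENNReal.ofReal |u (γ 0) - u (γ L)| ≤ curveLintegral g γ L

/-- The variational `p`-capacity of `F` relative to `Ω`. -/
noncomputable def pCapacity {X : Type*} [MetricSpace X] [MeasurableSpace X]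
    (μ : Measure X) (p : ℝ) (F Ω : Set X) : ℝ≥0∞ :=
  sInf { t | ∃ u : X → ℝ, (∃ K : ℝ≥0, LipschitzWith K u) ∧
    (∀ x ∈ F, 1 ≤ u x) ∧ (∀ x ∉ Ω, u x = 0) ∧
    ∃ g : X → ℝ≥0∞, IsPWeakUpperGradient μ p u g ∧ t = ∫⁻ x in Ω, g x ^ p ∂μ }

/-!
Let `|u x - u y| ≤ d(x,y) (g x + g y)` hold everywhere, with `u` Lipschitz, and let `γ` be a
1-Lipschitz curve on `[0, L]`. Cut `[0, L]` into `n` intervals of length `δ` and pick in each a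
point `tᵢ` where `g ∘ γ` is at most its mean. Chaining `u ∘ γ` through the `tᵢ` costs at most
`2δ (g (γ tᵢ) + g (γ tᵢ₊₁))` per step, hence at most `4 ∫ g ∘ γ` in total, while the two end
pieces cost `O(1/n)` by the Lipschitz bound. Letting `n → ∞` shows that `4g` is an upper gradient
along every curve, so no exceptional family is needed. A Hajłasz gradient valid off a null set
becomes one valid everywhere after setting it to `∞` on a measurable null hull, which changes no
integral; so every competitor for the Hajłasz capacity gives one for the `p`-capacity with
`4^p` times its energy.
-/

open Filter Topology Finset

def IsPointwiseHajlaszGradient {X : Type*} [MetricSpace X] (u : X → ℝ) (g : X → ℝ≥0∞) : Prop :=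
  ∀ x y, ENNReal.ofReal |u x - u y| ≤ ENNReal.ofReal (dist x y) * (g x + g y)

lemma IsPointwiseHajlaszGradient.comp_lipschitzWith_one {X Y : Type*} [MetricSpace X]
    [MetricSpace Y] {u : X → ℝ} {g : X → ℝ≥0∞} (hu : IsPointwiseHajlaszGradient u g)
    {γ : Y → X} (hγ : LipschitzWith 1 γ) : IsPointwiseHajlaszGradient (u ∘ γ) (g ∘ γ) :=
  fun s t => (hu (γ s) (γ t)).trans <| mul_le_mul_left
    (ENNReal.ofReal_le_ofReal <| by simpa using hγ.dist_le_mul s t) _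

lemma exists_mem_Ico_mul_le_setLIntegral {h : ℝ → ℝ≥0∞} (hh : AEMeasurable h) {a b : ℝ}
    (hab : a < b) : ∃ t ∈ Ico a b, h t * ENNReal.ofReal (b - a) ≤ ∫⁻ s in Ico a b, h s := by
  have hvol : volume (Ico a b) = ENNReal.ofReal (b - a) := Real.volume_Ico
  obtain ⟨t, ht, hle⟩ := exists_le_setLAverage (s := Ico a b) (by simp [hvol, hab])
    (by simp [hvol]) hh.restrict
  refine ⟨t, ht, ?_⟩
  rwa [setLAverage_eq, hvol, ENNReal.le_div_iff_mul_le (by simp [hab]) (by simp)] at hle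

lemma sum_setLIntegral_Ico_of_monotone (h : ℝ → ℝ≥0∞) {x : ℕ → ℝ} (hx : Monotone x) (n : ℕ) :
    ∑ i ∈ range n, ∫⁻ s in Ico (x i) (x (i + 1)), h s = ∫⁻ s in Ico (x 0) (x n), h s := by
  induction n with
  | zero => simp
  | succ n ih =>
    rw [sum_range_succ, ih, ← lintegral_union measurableSet_Ico
      (Ico_disjoint_Ico_same), Ico_union_Ico_eq_Ico (hx n.zero_le) (hx n.le_succ)]

lemma IsPointwiseHajlaszGradient.ofReal_abs_sub_le_sum {φ : ℝ → ℝ} {h : ℝ → ℝ≥0∞}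
    (hφ : IsPointwiseHajlaszGradient φ h) {t : ℕ → ℝ} {δ : ℝ}
    (ht : ∀ i, |t i - t (i + 1)| ≤ δ) (n : ℕ) :
    ENNReal.ofReal |φ (t 0) - φ (t n)| ≤ 2 * ENNReal.ofReal δ * ∑ i ∈ range (n + 1), h (t i) := by
  have hchain : ENNReal.ofReal |φ (t 0) - φ (t n)| ≤
      ∑ i ∈ range n, ENNReal.ofReal |φ (t i) - φ (t (i + 1))| := by
    rw [← ENNReal.ofReal_sum_of_nonneg fun _ _ => abs_nonneg _]
    simpa only [Real.dist_eq] using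
      ENNReal.ofReal_le_ofReal (dist_le_range_sum_dist (fun i => φ (t i)) n)
  calc ENNReal.ofReal |φ (t 0) - φ (t n)|
      ≤ ∑ i ∈ range n, ENNReal.ofReal δ * (h (t i) + h (t (i + 1))) := by
        refine hchain.trans (sum_le_sum fun i _ => (hφ _ _).trans ?_)
        rw [Real.dist_eq]
        exact mul_le_mul_left (ENNReal.ofReal_le_ofReal (ht i)) _
    _ = ENNReal.ofReal δ * (∑ i ∈ range n, h (t i) + ∑ i ∈ range n, h (t (i + 1))) := by
        rw [← mul_sum, sum_add_distrib]
    _ ≤ ENNReal.ofReal δ * (∑ i ∈ range (n + 1), h (t i) + ∑ i ∈ range (n + 1), h (t i)) := by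
        gcongr
        · exact n.le_succ
        · rw [sum_range_succ' (fun i => h (t i))]
          exact le_self_add
    _ = 2 * ENNReal.ofReal δ * ∑ i ∈ range (n + 1), h (t i) := by ring

lemma IsPointwiseHajlaszGradient.ofReal_abs_sub_le_four_mul_setLIntegral_add {φ : ℝ → ℝ}
    {h : ℝ → ℝ≥0∞} (hφ : IsPointwiseHajlaszGradient φ h) {K : ℝ≥0} (hK : LipschitzWith K φ)
    (hh : Measurable h) {a b : ℝ} (hab : a < b) (n : ℕ) :
    ENNReal.ofReal |φ a - φ b| ≤
      4 * (∫⁻ s in Ico a b, h s) + ENNReal.ofReal (2 * K * ((b - a) / (n + 1))) := by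
  set δ := (b - a) / (n + 1) with hδ
  have hδ_pos : 0 < δ := div_pos (sub_pos.2 hab) (by positivity)
  set x : ℕ → ℝ := fun i => a + i * δ with hx_def
  have hx_succ : ∀ i, x (i + 1) = x i + δ := fun i => by simp only [hx_def]; push_cast; ring
  have hx_mono : Monotone x := monotone_nat_of_le_succ fun i => by rw [hx_succ]; linarith
  have hx_zero : x 0 = a := by simp [hx_def]
  have hx_last : x (n + 1) = b := by simp only [hx_def, hδ]; push_cast; field_simp; ring
  choose t ht hht using fun i => exists_mem_Ico_mul_le_setLIntegral hh.aemeasurable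
    (show x i < x (i + 1) by rw [hx_succ]; linarith)
  have hx_sub : ∀ i, x (i + 1) - x i = δ := fun i => by rw [hx_succ]; ring
  simp only [hx_sub] at hht
  have ht' : ∀ i, x i ≤ t i ∧ t i < x i + δ := fun i => by simpa [hx_succ] using ht i
  have hLip : ∀ s s', |s - s'| ≤ δ → ENNReal.ofReal |φ s - φ s'| ≤ ENNReal.ofReal (K * δ) :=
    fun s s' hss' => ENNReal.ofReal_le_ofReal <| by
      simpa only [Real.dist_eq] using (hK.dist_le_mul s s').trans (by gcongr; rwa [Real.dist_eq])
  have hstart : ENNReal.ofReal |φ a - φ (t 0)| ≤ ENNReal.ofReal (K * δ) := by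
    refine hLip _ _ (abs_le.2 ⟨?_, ?_⟩) <;> linarith [ht' 0]
  have hend : ENNReal.ofReal |φ (t n) - φ b| ≤ ENNReal.ofReal (K * δ) := by
    refine hLip _ _ (abs_le.2 ⟨?_, ?_⟩) <;> linarith [ht' n, hx_succ n]
  have hgap : ∀ i, |t i - t (i + 1)| ≤ 2 * δ := fun i => by
    refine abs_le.2 ⟨?_, ?_⟩ <;> linarith [ht' i, ht' (i + 1), hx_succ i]
  have hmid : ENNReal.ofReal |φ (t 0) - φ (t n)| ≤ 4 * ∫⁻ s in Ico a b, h s :=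
    calc ENNReal.ofReal |φ (t 0) - φ (t n)|
        ≤ 2 * ENNReal.ofReal (2 * δ) * ∑ i ∈ range (n + 1), h (t i) :=
          hφ.ofReal_abs_sub_le_sum hgap n
      _ = 4 * ∑ i ∈ range (n + 1), h (t i) * ENNReal.ofReal δ := by
          rw [ENNReal.ofReal_mul zero_le_two, ← sum_mul, ENNReal.ofReal_ofNat]; ring
      _ ≤ 4 * ∑ i ∈ range (n + 1), ∫⁻ s in Ico (x i) (x (i + 1)), h s := by
          gcongr with i; exact hht i
      _ = 4 * ∫⁻ s in Ico a b, h s := by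
          rw [sum_setLIntegral_Ico_of_monotone h hx_mono, hx_zero, hx_last]
  calc ENNReal.ofReal |φ a - φ b|
      ≤ ENNReal.ofReal |φ a - φ (t 0)| + ENNReal.ofReal |φ (t 0) - φ (t n)|
        + ENNReal.ofReal |φ (t n) - φ b| := by
        simp only [← Real.dist_eq, ← edist_dist]
        exact edist_triangle4 _ _ _ _
    _ ≤ ENNReal.ofReal (K * δ) + 4 * (∫⁻ s in Ico a b, h s) + ENNReal.ofReal (K * δ) :=
        add_le_add (add_le_add hstart hmid) hend
    _ = 4 * (∫⁻ s in Ico a b, h s) + ENNReal.ofReal (2 * K * δ) := by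
        rw [add_comm (ENNReal.ofReal _), add_assoc, ← ENNReal.ofReal_add (by positivity)
          (by positivity), ← two_mul, mul_assoc]

lemma IsPointwiseHajlaszGradient.ofReal_abs_sub_le_four_mul_setLIntegral {φ : ℝ → ℝ}
    {h : ℝ → ℝ≥0∞} (hφ : IsPointwiseHajlaszGradient φ h) {K : ℝ≥0} (hK : LipschitzWith K φ)
    (hh : Measurable h) {a b : ℝ} (hab : a < b) :
    ENNReal.ofReal |φ a - φ b| ≤ 4 * ∫⁻ s in Ico a b, h s := by
  have hmesh : Tendsto (fun n : ℕ => 2 * K * ((b - a) / (n + 1))) atTop (𝓝 0) := by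
    simpa [div_eq_mul_one_div (b - a), mul_assoc] using
      tendsto_one_div_add_atTop_nhds_zero_nat.const_mul (2 * K * (b - a))
  have hlim : Tendsto (fun n : ℕ => 4 * (∫⁻ s in Ico a b, h s) +
      ENNReal.ofReal (2 * K * ((b - a) / (n + 1)))) atTop (𝓝 (4 * ∫⁻ s in Ico a b, h s)) := by
    simpa using tendsto_const_nhds.add (ENNReal.tendsto_ofReal hmesh)
  exact ge_of_tendsto' hlim (hφ.ofReal_abs_sub_le_four_mul_setLIntegral_add hK hh hab)

section MetricSpace

variable {X : Type*} [MetricSpace X]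

def IsUpperGradient (u : X → ℝ) (g : X → ℝ≥0∞) : Prop :=
  ∀ (γ : ℝ → X) (L : ℝ), 0 < L → LipschitzWith 1 γ →
    ENNReal.ofReal |u (γ 0) - u (γ L)| ≤ curveLintegral g γ L

lemma IsUpperGradient.isPWeakUpperGradient [MeasurableSpace X] {u : X → ℝ} {g : X → ℝ≥0∞}
    (hu : IsUpperGradient u g) (hg : Measurable g) (μ : Measure X) {p : ℝ} (hp : 0 < p) :
    IsPWeakUpperGradient μ p u g :=
  ⟨hg, 0, measurable_const, fun _ => ⟨1, one_pos, by simp [ENNReal.zero_rpow_of_pos hp]⟩,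
    fun γ L hL hγ _ => hu γ L hL hγ⟩

lemma IsPointwiseHajlaszGradient.isUpperGradient_four_mul [MeasurableSpace X] [BorelSpace X]
    {u : X → ℝ} {g : X → ℝ≥0∞} (hu : IsPointwiseHajlaszGradient u g) {K : ℝ≥0}
    (hK : LipschitzWith K u) (hg : Measurable g) :
    IsUpperGradient u (fun x => 4 * g x) := by
  intro γ L hL hγ
  calc ENNReal.ofReal |u (γ 0) - u (γ L)| ≤ 4 * ∫⁻ s in Ico 0 L, g (γ s) :=
        (hu.comp_lipschitzWith_one hγ).ofReal_abs_sub_le_four_mul_setLIntegral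
          (by simpa using hK.comp hγ) (hg.comp hγ.continuous.measurable) hL
    _ ≤ 4 * ∫⁻ s in Icc 0 L, g (γ s) := by gcongr; exact Ico_subset_Icc_self
    _ = curveLintegral (fun x => 4 * g x) γ L := (lintegral_const_mul' _ _ (by simp)).symm

lemma IsHolderWith.lipschitzWith {κ : ℝ} {u : X → ℝ} (hu : IsHolderWith κ 1 u) :
    LipschitzWith κ.toNNReal u :=
  LipschitzWith.of_dist_le_mul fun x y => by
    have hxy := hu x y
    rw [Real.rpow_one, ← Real.dist_eq] at hxy
    exact hxy.trans (mul_le_mul_of_nonneg_right (Real.le_coe_toNNReal κ) dist_nonneg)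

variable [MeasurableSpace X]

lemma IsHajlaszGradient.exists_isPointwiseHajlaszGradient {μ : Measure X} {u : X → ℝ}
    {g : X → ℝ≥0∞} (hg : IsHajlaszGradient μ 1 u g) :
    ∃ g' : X → ℝ≥0∞, Measurable g' ∧ g' =ᵐ[μ] g ∧ IsPointwiseHajlaszGradient u g' := by
  classical
  obtain ⟨hg_meas, N, hN, hgN⟩ := hg
  set T := toMeasurable μ N
  have hT : ∀ᵐ x ∂μ, x ∉ T := measure_eq_zero_iff_ae_notMem.1 (by rwa [measure_toMeasurable])
  refine ⟨T.piecewise (fun _ => ∞) g,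
    measurable_const.piecewise (measurableSet_toMeasurable μ N) hg_meas,
    hT.mono fun x hx => piecewise_eq_of_notMem _ _ _ hx, fun x y => ?_⟩
  rcases eq_or_ne x y with rfl | hxy
  · simp
  by_cases hxT : x ∈ T
  · simp [hxT, hxy]
  by_cases hyT : y ∈ T
  · simp [hyT, hxy]
  simpa [piecewise_eq_of_notMem _ _ _ hxT, piecewise_eq_of_notMem _ _ _ hyT] using
    hgN x (fun hxN => hxT (subset_toMeasurable μ N hxN)) y
      (fun hyN => hyT (subset_toMeasurable μ N hyN))

lemma pCapacity_le_four_rpow_mul_hajlaszCapacity [BorelSpace X] (μ : Measure X)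
    {p : ℝ} (hp : 0 < p) (F Ω : Set X) :
    pCapacity μ p F Ω ≤ ENNReal.ofReal (4 ^ p) * hajlaszCapacity μ 1 p F Ω := by
  have h4p : ENNReal.ofReal (4 ^ p) = 4 ^ p := by
    rw [← ENNReal.ofReal_rpow_of_pos four_pos]; norm_num
  have h4p_ne_top : (4 : ℝ≥0∞) ^ p ≠ ∞ := ENNReal.rpow_ne_top_of_nonneg hp.le (by simp)
  rw [h4p, hajlaszCapacity, sInf_eq_iInf', ENNReal.mul_iInf_of_ne (by simp [hp]) h4p_ne_top]
  refine le_iInf fun ⟨_, u, ⟨κ, hκ⟩, hu_F, hu_Ω, g, hg, rfl⟩ => ?_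
  obtain ⟨g', hg'_meas, hg'g, hg'⟩ := hg.exists_isPointwiseHajlaszGradient
  calc pCapacity μ p F Ω ≤ ∫⁻ x in Ω, (4 * g' x) ^ p ∂μ :=
        sInf_le ⟨u, ⟨_, hκ.lipschitzWith⟩, hu_F, hu_Ω, _,
          (hg'.isUpperGradient_four_mul hκ.lipschitzWith hg'_meas).isPWeakUpperGradient
            (by fun_prop) μ hp, rfl⟩
    _ = 4 ^ p * ∫⁻ x in Ω, g x ^ p ∂μ := by
        rw [← lintegral_const_mul' _ _ h4p_ne_top]
        refine lintegral_congr_ae ((ae_restrict_of_ae hg'g).mono fun x hx => ?_)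
        dsimp only
        rw [ENNReal.mul_rpow_of_nonneg _ _ hp.le, hx]
    _ ≤ 4 ^ p * ∫⁻ x, g x ^ p ∂μ := by gcongr; exact Measure.restrict_le_self

end MetricSpace

theorem stmt17_general {X : Type*} [MetricSpace X] [MeasurableSpace X] [BorelSpace X]
    (μ : Measure X)
    (p : ℝ) (hp : 1 < p)
    (Ω F : Set X) :
    pCapacity μ p F Ω ≤ ENNReal.ofReal (4 ^ p) * hajlaszCapacity μ 1 p F Ω ∧
    ∀ (u : X → ℝ) (K : ℝ≥0) (g : X → ℝ≥0∞), LipschitzWith K u → Measurable g →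
      (∀ x y : X, ENNReal.ofReal |u x - u y| ≤ ENNReal.ofReal (dist x y) * (g x + g y)) →
      IsPWeakUpperGradient μ p u (fun x => 4 * g x) := by
  have hp_pos : 0 < p := zero_lt_one.trans hp
  refine ⟨pCapacity_le_four_rpow_mul_hajlaszCapacity μ hp_pos F Ω, fun u K g hu hg hH => ?_⟩
  have hH : IsPointwiseHajlaszGradient u g := hH
  exact (hH.isUpperGradient_four_mul hu hg).isPWeakUpperGradient (by fun_prop) μ hp_pos

theorem stmt17 {X : Type*} [MetricSpace X] [MeasurableSpace X] [BorelSpace X]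
    (μ : Measure X)
    (hpos : ∀ (x : X) (r : ℝ), 0 < r → 0 < μ (ball x r))
    (hfin : ∀ (x : X) (r : ℝ), μ (ball x r) < ∞)
    (c : ℝ≥0) (hc : 1 < c)
    (hdbl : ∀ (x : X) (r : ℝ), 0 < r → μ (ball x (2 * r)) ≤ (c : ℝ≥0∞) * μ (ball x r))
    (p : ℝ) (hp : 1 < p)
    (Ω F : Set X) (hΩo : IsOpen Ω) (hΩb : Bornology.IsBounded Ω)
    (hF : IsClosed F) (hFΩ : F ⊆ Ω) :
    pCapacity μ p F Ω ≤ ENNReal.ofReal (4 ^ p) * hajlaszCapacity μ 1 p F Ω ∧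
    ∀ (u : X → ℝ) (K : ℝ≥0) (g : X → ℝ≥0∞), LipschitzWith K u → Measurable g →
      (∀ x y : X, ENNReal.ofReal |u x - u y| ≤ ENNReal.ofReal (dist x y) * (g x + g y)) →
      IsPWeakUpperGradient μ p u (fun x => 4 * g x) :=
  stmt17_general μ p hp Ω F
end
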